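/- arXiv:2302.01576 — 5 statements merged into one kernel-verified Lean document; each statement's English description precedes it below -/
import Mathlib

section
/- There is a universal constant C > 0 (independent of d and n) such that E[Z_n] ≤ C · d² · ( log(n^{1/d}) / n )^{1/d}, where Z_n = min_{1 ≤ i ≤ n} ‖x̃ − x_i‖² is the squared Euclidean distance from the test point to its nearest neighbor among the samples. -/
set_option maxHeartbeats 1000000

open MeasureTheory
open scoped ENNReal

/-- Uniform probability distribution on the closed Euclidean ball of radius `√(d+2)`
centered at the origin in `ℝ^d`. -/
noncomputable def uniformBall (d : ℕ) : Measure (EuclideanSpace ℝ (Fin d)) :=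
  (volume (Metric.closedBall (0 : EuclideanSpace ℝ (Fin d)) (Real.sqrt (d + 2))))⁻¹ •
    volume.restrict (Metric.closedBall (0 : EuclideanSpace ℝ (Fin d)) (Real.sqrt (d + 2)))

/-- The joint distribution of the i.i.d. samples `x_1, …, x_n` and the test point `x̃`. -/
noncomputable def jointMeasure (d n : ℕ) :
    Measure ((Fin n → EuclideanSpace ℝ (Fin d)) × EuclideanSpace ℝ (Fin d)) :=
  (Measure.pi fun _ : Fin n => uniformBall d).prod (uniformBall d)

section Aux

open Metric

variable (d : ℕ)

local notation "E" => EuclideanSpace ℝ (Fin d)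
local notation "R" => Real.sqrt (d + 2)
local notation "B" => Metric.closedBall (0 : EuclideanSpace ℝ (Fin d)) (Real.sqrt (d + 2))

lemma R_pos : (0:ℝ) < R := Real.sqrt_pos.2 (by positivity)

lemma volB_ne_zero : volume B ≠ 0 := (measure_closedBall_pos volume 0 (R_pos d)).ne'

lemma volB_ne_top : volume B ≠ ⊤ := measure_closedBall_lt_top.ne

lemma uniformBall_apply (s : Set E) (hs : MeasurableSet s) :
    uniformBall d s = (volume B)⁻¹ * volume (s ∩ B) := by
  simp [uniformBall, Measure.smul_apply, Measure.restrict_apply hs, smul_eq_mul]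

instance : IsProbabilityMeasure (uniformBall d) := by
  constructor
  rw [uniformBall_apply d _ MeasurableSet.univ, Set.univ_inter]
  exact ENNReal.inv_mul_cancel (volB_ne_zero d) (volB_ne_top d)

lemma uniformBall_ball_one : uniformBall d B = 1 := by
  rw [uniformBall_apply d _ measurableSet_closedBall, Set.inter_self]
  exact ENNReal.inv_mul_cancel (volB_ne_zero d) (volB_ne_top d)

lemma smallBall_subset {x : E} (hx : x ∈ B) {r : ℝ} (hr : 0 ≤ r) (hr2 : r ≤ 2 * R) :
    ∃ y : E, Metric.closedBall y (r/2) ⊆ Metric.closedBall x r ∧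
      Metric.closedBall y (r/2) ⊆ B := by
  have hR := R_pos d
  have hxR : ‖x‖ ≤ R := by simpa [mem_closedBall_zero_iff] using hx
  rcases le_or_gt ‖x‖ (r/2) with h | h
  · refine ⟨0, fun z hz => ?_, fun z hz => ?_⟩ <;>
      rw [mem_closedBall_zero_iff] at hz
    · rw [mem_closedBall_iff_norm]
      calc ‖z - x‖ ≤ ‖z‖ + ‖x‖ := norm_sub_le _ _
      _ ≤ r/2 + r/2 := add_le_add hz h
      _ = r := by ring
    · rw [mem_closedBall_zero_iff]
      linarith
  · have hxn : (0:ℝ) < ‖x‖ := lt_of_le_of_lt (by positivity) h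
    set y : E := (1 - r/(2*‖x‖)) • x with hy
    have hc : 0 ≤ 1 - r/(2*‖x‖) := by
      rw [sub_nonneg, div_le_one (by positivity)]; linarith
    have hny : ‖y‖ = ‖x‖ - r/2 := by
      rw [hy, norm_smul, Real.norm_eq_abs, abs_of_nonneg hc]
      field_simp
    have hyx : ‖y - x‖ = r/2 := by
      have h1 : y - x = (-(r/(2*‖x‖))) • x := by
        rw [hy, sub_smul, one_smul, neg_smul]; abel
      rw [h1, norm_smul, norm_neg, Real.norm_eq_abs, abs_of_nonneg (by positivity)]
      field_simp
    refine ⟨y, fun z hz => ?_, fun z hz => ?_⟩ <;>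
      rw [mem_closedBall_iff_norm] at hz
    · rw [mem_closedBall_iff_norm]
      calc ‖z - x‖ ≤ ‖z - y‖ + ‖y - x‖ := norm_sub_le_norm_sub_add_norm_sub _ _ _
      _ ≤ r/2 + r/2 := by rw [hyx]; exact add_le_add_left hz _
      _ = r := by ring
    · rw [mem_closedBall_zero_iff]
      calc ‖z‖ = ‖(z - y) + y‖ := by rw [sub_add_cancel]
      _ ≤ ‖z - y‖ + ‖y‖ := norm_add_le _ _
      _ ≤ r/2 + (‖x‖ - r/2) := by rw [hny]; exact add_le_add_left hz _
      _ ≤ R := by linarith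

lemma uniformBall_closedBall_ge {x : E} (hx : x ∈ B) {r : ℝ} (hr : 0 ≤ r)
    (hr2 : r ≤ 2 * R) :
    ENNReal.ofReal ((r / (2 * R)) ^ d) ≤ uniformBall d (Metric.closedBall x r) := by
  have hR := R_pos d
  obtain ⟨y, hy1, hy2⟩ := smallBall_subset d hx hr hr2
  rw [uniformBall_apply d _ measurableSet_closedBall]
  rw [← ENNReal.div_eq_inv_mul, ENNReal.le_div_iff_mul_le (Or.inl (volB_ne_zero d))
    (Or.inl (volB_ne_top d))]
  have hvol_small : volume (Metric.closedBall y (r/2)) ≤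
      volume (Metric.closedBall x r ∩ B) :=
    measure_mono (fun z hz => ⟨hy1 hz, hy2 hz⟩)
  refine le_trans ?_ hvol_small
  rw [Measure.addHaar_closedBall _ _ (by positivity : (0:ℝ) ≤ r/2),
    Measure.addHaar_closedBall _ _ hR.le, finrank_euclideanSpace_fin]
  rw [← mul_assoc, ← ENNReal.ofReal_mul (by positivity)]
  have : (r / (2 * R)) ^ d * R ^ d = (r/2) ^ d := by
    rw [← mul_pow]
    congr 1
    field_simp
  rw [this]

lemma ae_mem_ball : ∀ᵐ x ∂(uniformBall d), x ∈ B := by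
  rw [uniformBall]
  exact Measure.ae_smul_measure (ae_restrict_mem measurableSet_closedBall) _

end Aux

lemma measurable_Z (d n : ℕ) :
    Measurable (fun ω : (Fin n → EuclideanSpace ℝ (Fin d)) × EuclideanSpace ℝ (Fin d) =>
      ⨅ i : Fin n, ‖ω.2 - ω.1 i‖ ^ 2) :=
  Measurable.iInf fun i =>
    ((measurable_snd.sub ((measurable_pi_apply i).comp measurable_fst)).norm).pow_const 2

lemma tail_bound (d n : ℕ) (hd : 1 ≤ d) (hn : 2 ≤ n) :
    jointMeasure d n {ω | (2 * Real.sqrt (d+2) * (Real.log n / n) ^ ((d:ℝ)⁻¹))^2 <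
        ⨅ i : Fin n, ‖ω.2 - ω.1 i‖ ^ 2} ≤ ENNReal.ofReal (1/n) := by
  have hn0 : (0:ℝ) < n := by positivity
  have hn1 : (1:ℝ) < n := by exact_mod_cast hn
  have hd0 : (d:ℝ) ≠ 0 := by positivity
  set R : ℝ := Real.sqrt (d+2) with hR
  have hRpos : 0 < R := Real.sqrt_pos.2 (by positivity)
  set p : ℝ := Real.log n / n with hp
  have hL : 0 < Real.log n := Real.log_pos hn1
  have hp0 : 0 < p := by positivity
  have hp1 : p ≤ 1 := by
    rw [hp, div_le_one hn0]
    have := Real.log_le_sub_one_of_pos hn0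
    linarith
  set r : ℝ := 2 * R * p ^ ((d:ℝ)⁻¹) with hr
  have hq1 : p ^ ((d:ℝ)⁻¹) ≤ 1 := Real.rpow_le_one hp0.le hp1 (by positivity)
  have hr0 : 0 ≤ r := by positivity
  have hr2R : r ≤ 2 * R := by
    calc r = 2 * R * p ^ ((d:ℝ)⁻¹) := hr
    _ ≤ 2 * R * 1 := by gcongr
    _ = 2 * R := mul_one _
  have hpem : (r / (2 * R)) ^ d = p := by
    have h1 : r / (2 * R) = p ^ ((d:ℝ)⁻¹) := by
      rw [hr]; field_simp
    rw [h1, ← Real.rpow_natCast (p ^ ((d:ℝ)⁻¹)) d, ← Real.rpow_mul hp0.le,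
      inv_mul_cancel₀ hd0, Real.rpow_one]
  set S := {ω : (Fin n → EuclideanSpace ℝ (Fin d)) × EuclideanSpace ℝ (Fin d) |
      r ^2 < ⨅ i : Fin n, ‖ω.2 - ω.1 i‖ ^ 2} with hSdef
  have hS : MeasurableSet S := measurableSet_lt measurable_const (measurable_Z d n)
  have key_real : (1 - p)^n ≤ 1/n := by
    have h2 : 1 - p ≤ Real.exp (-p) := by
      have := Real.add_one_le_exp (-p); linarith
    calc (1-p)^n ≤ (Real.exp (-p))^n := pow_le_pow_left₀ (by linarith) h2 n
    _ = Real.exp (n * (-p)) := by rw [Real.exp_nat_mul]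
    _ = Real.exp (-Real.log n) := by
        congr 1
        rw [hp]; field_simp
    _ = 1/n := by rw [Real.exp_neg, Real.exp_log hn0, one_div]
  show jointMeasure d n S ≤ ENNReal.ofReal (1/n)
  rw [jointMeasure, Measure.prod_apply_symm hS]
  calc ∫⁻ x, (Measure.pi fun _ : Fin n => uniformBall d) ((fun xs => (xs, x)) ⁻¹' S)
        ∂(uniformBall d)
      ≤ ∫⁻ _, ENNReal.ofReal ((1-p)^n) ∂(uniformBall d) := by
        apply lintegral_mono_ae
        filter_upwards [ae_mem_ball d] with x hx
        have hsub : (fun xs => (xs, x)) ⁻¹' S ⊆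
            Set.univ.pi fun _ : Fin n => (Metric.closedBall x r)ᶜ := by
          intro xs hxs
          rw [Set.mem_univ_pi]
          intro i
          simp only [Set.mem_preimage, hSdef, Set.mem_setOf_eq] at hxs
          intro hmem
          have hbdd : BddBelow (Set.range fun i : Fin n => ‖x - xs i‖^2) :=
            ⟨0, by rintro _ ⟨j, rfl⟩; positivity⟩
          have h3 := ciInf_le hbdd i
          have h4 : ‖x - xs i‖ ≤ r := by
            rw [mem_closedBall_iff_norm] at hmem
            rwa [norm_sub_rev]
          have h5 : ‖x - xs i‖^2 ≤ r^2 := pow_le_pow_left₀ (norm_nonneg _) h4 2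
          linarith
        calc (Measure.pi fun _ : Fin n => uniformBall d) ((fun xs => (xs, x)) ⁻¹' S)
            ≤ (Measure.pi fun _ : Fin n => uniformBall d)
              (Set.univ.pi fun _ : Fin n => (Metric.closedBall x r)ᶜ) := measure_mono hsub
        _ = ∏ _i : Fin n, uniformBall d (Metric.closedBall x r)ᶜ := Measure.pi_pi _ _
        _ = (uniformBall d (Metric.closedBall x r)ᶜ)^n := by
            rw [Finset.prod_const, Finset.card_univ, Fintype.card_fin]
        _ ≤ (ENNReal.ofReal (1-p))^n := by
            apply pow_le_pow_left₀ (zero_le)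
            have h1 : ENNReal.ofReal p ≤ uniformBall d (Metric.closedBall x r) := by
              have := uniformBall_closedBall_ge d hx hr0 hr2R
              rwa [hpem] at this
            calc uniformBall d (Metric.closedBall x r)ᶜ
                = 1 - uniformBall d (Metric.closedBall x r) :=
                  prob_compl_eq_one_sub measurableSet_closedBall
            _ ≤ 1 - ENNReal.ofReal p := tsub_le_tsub_left h1 1
            _ = ENNReal.ofReal (1-p) := by
                rw [ENNReal.ofReal_sub _ hp0.le, ENNReal.ofReal_one]
        _ = ENNReal.ofReal ((1-p)^n) := (ENNReal.ofReal_pow (by linarith) n).symm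
  _ = ENNReal.ofReal ((1-p)^n) := by rw [lintegral_const, measure_univ, mul_one]
  _ ≤ ENNReal.ofReal (1/n) := ENNReal.ofReal_le_ofReal key_real

lemma final_real (d n : ℕ) (hd : 1 ≤ d) (hn : 2 ≤ n) :
    (2 * Real.sqrt (d+2) * (Real.log n / n) ^ ((d:ℝ)⁻¹))^2 + 4*((d:ℝ)+2) * (1/n)
      ≤ 48 * (d:ℝ)^2 * (Real.log n / ((d:ℝ) * n)) ^ ((d:ℝ)⁻¹) := by
  have hd1 : (1:ℝ) ≤ d := by exact_mod_cast hd
  have hd0 : (0:ℝ) < d := by linarith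
  have hn2 : (2:ℝ) ≤ n := by exact_mod_cast hn
  have hn0 : (0:ℝ) < n := by linarith
  set L : ℝ := Real.log n with hLdef
  have hL2 : 1/2 ≤ L := by
    have h1 : Real.log 2 ≤ L := Real.log_le_log (by norm_num) hn2
    have h2 := Real.log_two_gt_d9
    linarith
  have hL0 : 0 < L := by linarith
  have hLn : L ≤ n := by
    have := Real.log_le_sub_one_of_pos hn0
    linarith
  set a : ℝ := (L / ((d:ℝ) * n)) ^ ((d:ℝ)⁻¹) with hadef
  have ha0 : 0 < a := Real.rpow_pos_of_pos (by positivity) _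
  set q : ℝ := (L / n) ^ ((d:ℝ)⁻¹) with hqdef
  have hq0 : 0 < q := Real.rpow_pos_of_pos (by positivity) _
  have hq1 : q ≤ 1 := Real.rpow_le_one (by positivity) (by rw [div_le_one hn0]; linarith)
    (by positivity)
  have hd2 : (d:ℝ) ^ ((d:ℝ)⁻¹) ≤ 2 := by
    have h1 : (d:ℝ) ≤ (2:ℝ) ^ (d:ℕ) := by
      exact_mod_cast (Nat.lt_two_pow_self (n := d)).le
    calc (d:ℝ) ^ ((d:ℝ)⁻¹) ≤ ((2:ℝ) ^ (d:ℕ)) ^ ((d:ℝ)⁻¹) :=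
          Real.rpow_le_rpow (by positivity) h1 (by positivity)
    _ = 2 := by
        rw [← Real.rpow_natCast 2 d, ← Real.rpow_mul (by norm_num),
          mul_inv_cancel₀ (by positivity : (d:ℝ) ≠ 0), Real.rpow_one]
  have hC1 : q ≤ 2 * a := by
    have h1 : L / n = (d:ℝ) * (L / ((d:ℝ) * n)) := by field_simp
    calc q = ((d:ℝ) * (L / ((d:ℝ) * n))) ^ ((d:ℝ)⁻¹) := by rw [hqdef, h1]
    _ = (d:ℝ) ^ ((d:ℝ)⁻¹) * a := Real.mul_rpow (by positivity) (by positivity)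
    _ ≤ 2 * a := by gcongr
  have hC3 : 1 / (2*(d:ℝ)*n) ≤ a := by
    have hx0 : (0:ℝ) < 1 / (2*(d:ℝ)*n) := by positivity
    have hx1 : 1 / (2*(d:ℝ)*n) ≤ 1 := by
      rw [div_le_one (by positivity)]; nlinarith
    calc 1 / (2*(d:ℝ)*n) = (1 / (2*(d:ℝ)*n)) ^ (1:ℝ) := (Real.rpow_one _).symm
    _ ≤ (1 / (2*(d:ℝ)*n)) ^ ((d:ℝ)⁻¹) := by
        apply Real.rpow_le_rpow_of_exponent_ge hx0 hx1
        rw [inv_le_one_iff₀]; right; exact hd1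
    _ ≤ a := by
        apply Real.rpow_le_rpow hx0.le _ (by positivity)
        rw [div_le_div_iff₀ (by positivity) (by positivity)]
        nlinarith [mul_nonneg (mul_nonneg (by linarith : (0:ℝ) ≤ 2*L-1) hd0.le) hn0.le]
  have hsq : Real.sqrt ((d:ℝ)+2) ^ 2 = (d:ℝ) + 2 := Real.sq_sqrt (by positivity)
  have hterm1 : (2 * Real.sqrt (d+2) * q)^2 ≤ 24 * (d:ℝ)^2 * a := by
    have h1 : (2 * Real.sqrt (d+2) * q)^2 = 4 * ((d:ℝ)+2) * q^2 := by
      rw [mul_pow, mul_pow]; rw [hsq]; ring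
    have h2 : q^2 ≤ q := by nlinarith
    calc (2 * Real.sqrt (d+2) * q)^2 = 4 * ((d:ℝ)+2) * q^2 := h1
    _ ≤ 4 * ((d:ℝ)+2) * q := mul_le_mul_of_nonneg_left h2 (by positivity)
    _ ≤ 4 * ((d:ℝ)+2) * (2*a) := mul_le_mul_of_nonneg_left hC1 (by positivity)
    _ ≤ 24 * (d:ℝ)^2 * a := by
        nlinarith [mul_nonneg (by nlinarith : (0:ℝ) ≤ 24*(d:ℝ)^2 - 8*((d:ℝ)+2)) ha0.le]
  have hterm2 : 4*((d:ℝ)+2) * (1/n) ≤ 24 * (d:ℝ)^2 * a := by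
    have h1 : 1/(n:ℝ) ≤ 2*(d:ℝ)*a := by
      calc 1/(n:ℝ) = 2*(d:ℝ)*(1/(2*(d:ℝ)*n)) := by field_simp
      _ ≤ 2*(d:ℝ)*a := by gcongr
    calc 4*((d:ℝ)+2) * (1/n) ≤ 4*((d:ℝ)+2) * (2*(d:ℝ)*a) := by
          apply mul_le_mul_of_nonneg_left h1 (by positivity)
    _ ≤ 24 * (d:ℝ)^2 * a := by
        nlinarith [mul_nonneg (by nlinarith : (0:ℝ) ≤ 24*(d:ℝ)^2 - 8*(d:ℝ)*((d:ℝ)+2)) ha0.le]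
  linarith

/-- **Lemma (nearest neighbor concentration).** There is a universal constant `C > 0`,
independent of `d` and `n`, such that
`E[Z_n] ≤ C d² (log(n^{1/d})/n)^{1/d}`, where
`Z_n = min_{1 ≤ i ≤ n} ‖x̃ - x_i‖²` for `x̃, x_1, …, x_n` i.i.d. uniform on the
closed Euclidean ball of radius `√(d+2)` in `ℝ^d`. -/
theorem nearest_neighbor_concentration :
    ∃ C : ℝ, 0 < C ∧
      ∀ (d n : ℕ), 1 ≤ d → 2 ≤ n →
        ∫⁻ ω, ENNReal.ofReal (⨅ i : Fin n, ‖ω.2 - ω.1 i‖ ^ 2) ∂(jointMeasure d n)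
          ≤ ENNReal.ofReal
              (C * (d : ℝ) ^ 2 *
                (Real.log ((n : ℝ) ^ ((d : ℝ)⁻¹)) / (n : ℝ)) ^ ((d : ℝ)⁻¹)) := by
  refine ⟨48, by norm_num, fun d n hd hn => ?_⟩
  have hn0 : (0:ℝ) < n := by
    have : (2:ℝ) ≤ n := by exact_mod_cast hn
    linarith
  have hd0 : (d:ℝ) ≠ 0 := by
    have : (1:ℝ) ≤ d := by exact_mod_cast hd
    linarith
  haveI : IsProbabilityMeasure (jointMeasure d n) :=
    inferInstanceAs (IsProbabilityMeasure
      ((Measure.pi fun _ : Fin n => uniformBall d).prod (uniformBall d)))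
  haveI : Nonempty (Fin n) := ⟨⟨0, by omega⟩⟩
  set R : ℝ := Real.sqrt (d+2) with hRdef
  set r : ℝ := 2 * R * (Real.log n / n) ^ ((d:ℝ)⁻¹) with hrdef
  have hr0 : 0 ≤ r := by
    have hL : 0 < Real.log n := Real.log_pos (by exact_mod_cast hn)
    have : (0:ℝ) < R := Real.sqrt_pos.2 (by positivity)
    positivity
  set S := {ω : (Fin n → EuclideanSpace ℝ (Fin d)) × EuclideanSpace ℝ (Fin d) |
      r ^ 2 < ⨅ i : Fin n, ‖ω.2 - ω.1 i‖ ^ 2} with hSdef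
  have hS : MeasurableSet S := measurableSet_lt measurable_const (measurable_Z d n)
  -- a.e. all points in ball
  have hmemG : ∀ᵐ ω ∂(jointMeasure d n),
      (∀ i, ω.1 i ∈ Metric.closedBall (0:EuclideanSpace ℝ (Fin d)) R) ∧
      ω.2 ∈ Metric.closedBall (0:EuclideanSpace ℝ (Fin d)) R := by
    set G := (Set.univ.pi fun _ : Fin n =>
        Metric.closedBall (0:EuclideanSpace ℝ (Fin d)) R) ×ˢ
        Metric.closedBall (0:EuclideanSpace ℝ (Fin d)) R with hGdef
    have hG : MeasurableSet G :=
      (MeasurableSet.univ_pi fun _ => measurableSet_closedBall).prod measurableSet_closedBall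
    have hG1 : jointMeasure d n G = 1 := by
      rw [jointMeasure, hGdef, Measure.prod_prod, Measure.pi_pi]
      simp [uniformBall_ball_one d]
      rw [hRdef, uniformBall_ball_one d, one_pow, mul_one]
    have hGc : jointMeasure d n Gᶜ = 0 := by
      rw [measure_compl hG (measure_ne_top _ _), measure_univ, hG1, tsub_self]
    rw [ae_iff]
    convert hGc using 2
    ext ω
    simp [hGdef, Set.mem_prod, Set.mem_univ_pi, not_and_or, not_forall]
  -- the pointwise bound
  calc ∫⁻ ω, ENNReal.ofReal (⨅ i : Fin n, ‖ω.2 - ω.1 i‖ ^ 2) ∂(jointMeasure d n)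
      ≤ ∫⁻ ω, (ENNReal.ofReal (r^2) +
          S.indicator (fun _ => ENNReal.ofReal (4*((d:ℝ)+2))) ω) ∂(jointMeasure d n) := by
        apply lintegral_mono_ae
        filter_upwards [hmemG] with ω hω
        by_cases hωS : ω ∈ S
        · rw [Set.indicator_of_mem hωS]
          have i0 : Fin n := ⟨0, by omega⟩
          have hbdd : BddBelow (Set.range fun i : Fin n => ‖ω.2 - ω.1 i‖^2) :=
            ⟨0, by rintro _ ⟨j, rfl⟩; positivity⟩
          have h3 := ciInf_le hbdd i0
          have h4 : ‖ω.2 - ω.1 i0‖ ≤ 2*R := by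
            calc ‖ω.2 - ω.1 i0‖ ≤ ‖ω.2‖ + ‖ω.1 i0‖ := norm_sub_le _ _
            _ ≤ R + R := add_le_add
                (by simpa [mem_closedBall_zero_iff] using hω.2)
                (by simpa [mem_closedBall_zero_iff] using hω.1 i0)
            _ = 2*R := by ring
          have h5 : ‖ω.2 - ω.1 i0‖^2 ≤ 4*((d:ℝ)+2) := by
            have h6 := pow_le_pow_left₀ (norm_nonneg _) h4 2
            have h7 : (2*R)^2 = 4*((d:ℝ)+2) := by
              rw [mul_pow, hRdef, Real.sq_sqrt (by positivity : (0:ℝ) ≤ (d:ℝ)+2)]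
              norm_num
            linarith [h6, h7.le]
          have hZ : (⨅ i : Fin n, ‖ω.2 - ω.1 i‖ ^ 2) ≤ 4*((d:ℝ)+2) := le_trans h3 h5
          calc ENNReal.ofReal (⨅ i : Fin n, ‖ω.2 - ω.1 i‖ ^ 2)
              ≤ ENNReal.ofReal (4*((d:ℝ)+2)) := ENNReal.ofReal_le_ofReal hZ
          _ ≤ ENNReal.ofReal (r^2) + ENNReal.ofReal (4*((d:ℝ)+2)) := le_add_self
        · rw [Set.indicator_of_notMem hωS, add_zero]
          have : (⨅ i : Fin n, ‖ω.2 - ω.1 i‖ ^ 2) ≤ r^2 := not_lt.1 hωS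
          exact ENNReal.ofReal_le_ofReal this
  _ = ENNReal.ofReal (r^2) + ENNReal.ofReal (4*((d:ℝ)+2)) * jointMeasure d n S := by
        rw [lintegral_add_left measurable_const, lintegral_const, measure_univ, mul_one,
          lintegral_indicator_const hS]
  _ ≤ ENNReal.ofReal (r^2) + ENNReal.ofReal (4*((d:ℝ)+2)) * ENNReal.ofReal (1/n) := by
        gcongr
        exact tail_bound d n hd hn
  _ = ENNReal.ofReal (r^2 + 4*((d:ℝ)+2) * (1/n)) := by
        rw [← ENNReal.ofReal_mul (by positivity), ← ENNReal.ofReal_add (by positivity)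
          (by positivity)]
  _ ≤ ENNReal.ofReal (48 * (d:ℝ)^2 * (Real.log n / ((d:ℝ) * n)) ^ ((d:ℝ)⁻¹)) :=
        ENNReal.ofReal_le_ofReal (final_real d n hd hn)
  _ = ENNReal.ofReal (48 * (d:ℝ)^2 *
        (Real.log ((n : ℝ) ^ ((d : ℝ)⁻¹)) / (n : ℝ)) ^ ((d : ℝ)⁻¹)) := by
        congr 2
        rw [Real.log_rpow hn0]
        field_simp
end

section
/- There is a universal constant C > 0 such that the estimation-error term satisfies T_1 := E[(f_n(x̃) − f_∞(x̃))²] + E[(f_n(x_NN) − f_∞(x_NN))²] ≤ C · d² L² n^{−2/3}. -/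
open MeasureTheory
open scoped RealInnerProductSpace ENNReal

/-- `θn xs` is a minimizer of the empirical risk
`(1/n) ∑ i (⟨x_i, θ⟩ - ⟨x_i, θ⋆⟩)²` over the ball `{θ : ‖θ‖ ≤ L}`. -/
def IsERM (d n : ℕ) (L : ℝ) (θstar : EuclideanSpace ℝ (Fin d))
    (θn : (Fin n → EuclideanSpace ℝ (Fin d)) → EuclideanSpace ℝ (Fin d)) : Prop :=
  ∀ xs : Fin n → EuclideanSpace ℝ (Fin d),
    ‖θn xs‖ ≤ L ∧
    ∀ θ : EuclideanSpace ℝ (Fin d), ‖θ‖ ≤ L →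
      (n : ℝ)⁻¹ * ∑ i, (⟪xs i, θn xs⟫ - ⟪xs i, θstar⟫) ^ 2 ≤
        (n : ℝ)⁻¹ * ∑ i, (⟪xs i, θ⟫ - ⟪xs i, θstar⟫) ^ 2

/-- `xNN (xs, x̃)` is a nearest neighbor of `x̃` among `x_1, …, x_n`
in Euclidean distance. -/
def IsNN (d n : ℕ)
    (xNN : (Fin n → EuclideanSpace ℝ (Fin d)) × EuclideanSpace ℝ (Fin d) →
      EuclideanSpace ℝ (Fin d)) : Prop :=
  ∀ ω : (Fin n → EuclideanSpace ℝ (Fin d)) × EuclideanSpace ℝ (Fin d),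
    ∃ j : Fin n, xNN ω = ω.1 j ∧ ∀ i : Fin n, ‖ω.2 - xNN ω‖ ≤ ‖ω.2 - ω.1 i‖

/-!
Write `b = (1/n) ∑ ⟪xᵢ, θ⋆⟫ xᵢ` for the empirical second-moment matrix applied to `θ⋆`.
Comparing the constrained least-squares solution `θₙ` with the feasible point `L θ⋆` gives,
deterministically, `‖θₙ - L θ⋆‖ ≤ 2L ‖b - θ⋆‖`: optimality forces `⟪θₙ - L θ⋆, b⟫ ≥ 0` because
`L < 1`, and `‖θₙ‖ ≤ L` forces `‖θₙ - L θ⋆‖² ≤ -2L ⟪θₙ - L θ⋆, θ⋆⟫`. The test point and its nearest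
neighbour both lie in the ball of radius `√(d+2)`, so each squared prediction error is at most
`4L² (d+2) ‖b - θ⋆‖²`. The uniform distribution on that ball is rotation invariant with
`E‖x‖² = d`, hence isotropic: `E[⟪x, θ⋆⟫ x] = θ⋆`. So `b - θ⋆` is the average of `n` i.i.d. centred
vectors, and `E‖b - θ⋆‖² = E‖⟪x, θ⋆⟫ x - θ⋆‖² / n ≤ (d+1)/n`. Altogether
`T₁ ≤ 8L² (d+1)(d+2)/n ≤ 48 d² L² n^(-2/3)`.
-/

open Metric Module Set ProbabilityTheory

section ConstrainedLeastSquares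

variable {E : Type*} [NormedAddCommGroup E] [InnerProductSpace ℝ E] {n : ℕ}

/-- `(1/n) ∑ᵢ xᵢ xᵢᵀ θ`: the empirical second-moment matrix of the sample, applied to `θ`. -/
noncomputable def empiricalSecondMoment (θ : E) (x : Fin n → E) : E :=
  (n : ℝ)⁻¹ • ∑ i, ⟪x i, θ⟫ • x i

theorem norm_sub_smul_le_of_sum_sq_le {x : Fin n → E} {θ T : E} {L : ℝ} (hθ : ‖θ‖ = 1)
    (hL₀ : 0 ≤ L) (hL₁ : L < 1) (hT : ‖T‖ ≤ L)
    (hopt : ∑ i, (⟪x i, T⟫ - ⟪x i, θ⟫) ^ 2 ≤ ∑ i, (⟪x i, L • θ⟫ - ⟪x i, θ⟫) ^ 2) :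
    ‖T - L • θ‖ ≤ 2 * L * ‖empiricalSecondMoment θ x - θ‖ := by
  set v := T - L • θ
  set b := empiricalSecondMoment θ x
  have hT_eq : T = L • θ + v := by simp [v]
  have hvb : 0 ≤ ⟪v, b⟫ := by
    have hexp : ∀ i, (⟪x i, T⟫ - ⟪x i, θ⟫) ^ 2 = (⟪x i, L • θ⟫ - ⟪x i, θ⟫) ^ 2 +
        (⟪x i, v⟫ ^ 2 + 2 * (L - 1) * (⟪x i, θ⟫ * ⟪v, x i⟫)) := fun i => by
      rw [hT_eq, inner_add_right, real_inner_smul_right, real_inner_comm v]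
      ring
    simp_rw [hexp, Finset.sum_add_distrib, ← Finset.mul_sum] at hopt
    have hsq : 0 ≤ ∑ i, ⟪x i, v⟫ ^ 2 := Finset.sum_nonneg fun i _ => sq_nonneg _
    have hb : ⟪v, b⟫ = (n : ℝ)⁻¹ * ∑ i, ⟪x i, θ⟫ * ⟪v, x i⟫ := by
      simp_rw [b, empiricalSecondMoment, real_inner_smul_right, inner_sum, real_inner_smul_right]
    rw [hb]
    refine mul_nonneg (by positivity) ?_
    nlinarith
  have hvθ : ‖v‖ ^ 2 ≤ -(2 * L * ⟪v, θ⟫) := by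
    have h := pow_le_pow_left₀ (norm_nonneg T) hT 2
    rw [hT_eq, norm_add_sq_real, norm_smul, Real.norm_of_nonneg hL₀, hθ, real_inner_smul_left,
      real_inner_comm] at h
    linarith
  have hvv : ‖v‖ * ‖v‖ ≤ 2 * L * ‖b - θ‖ * ‖v‖ := by
    have h := real_inner_le_norm v (b - θ)
    rw [inner_sub_right] at h
    nlinarith
  rcases (norm_nonneg v).eq_or_lt with hv | hv
  · rw [← hv]
    positivity
  · exact le_of_mul_le_mul_right hvv hv

end ConstrainedLeastSquares

section HaarSecondMoment

variable {E : Type*} [NormedAddCommGroup E] [InnerProductSpace ℝ E] [FiniteDimensional ℝ E]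
  [MeasurableSpace E] [BorelSpace E] [Nontrivial E] (μ : Measure E) [μ.IsAddHaarMeasure]

theorem integral_Ioi_pow_smul_indicator_Iic_sq (n : ℕ) {r : ℝ} (hr : 0 ≤ r) :
    ∫ y in Ioi (0 : ℝ), y ^ n • (Iic r).indicator (· ^ 2) y = r ^ (n + 3) / (n + 3) := by
  have hpow : (fun y : ℝ => y ^ n • (Iic r).indicator (· ^ 2) y) =
      (Iic r).indicator (· ^ (n + 2)) := by
    ext y
    by_cases hy : y ∈ Iic r <;> simp [hy, pow_add]
  rw [hpow, integral_indicator measurableSet_Iic, Measure.restrict_restrict measurableSet_Iic,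
    inter_comm, Ioi_inter_Iic, ← intervalIntegral.integral_of_le hr, integral_pow]
  push_cast
  ring

theorem setIntegral_closedBall_norm_sq {r : ℝ} (hr : 0 ≤ r) :
    ∫ x in closedBall (0 : E) r, ‖x‖ ^ 2 ∂μ =
      finrank ℝ E / (finrank ℝ E + 2) * r ^ 2 * μ.real (closedBall 0 r) := by
  obtain ⟨k, hk⟩ : ∃ k, finrank ℝ E = k + 1 := Nat.exists_eq_add_of_le' finrank_pos
  have hball : (closedBall (0 : E) r).indicator (‖·‖ ^ 2) =
      fun x => (Iic r).indicator (· ^ 2) ‖x‖ := by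
    ext x
    by_cases hx : ‖x‖ ≤ r <;> simp [indicator, hx]
  rw [← integral_indicator measurableSet_closedBall, hball, integral_fun_norm_addHaar, hk,
    Nat.add_sub_cancel, integral_Ioi_pow_smul_indicator_Iic_sq k hr,
    Measure.addHaar_real_closedBall μ 0 hr, hk]
  simp only [nsmul_eq_mul, smul_eq_mul]
  field_simp
  push_cast
  ring

end HaarSecondMoment

section Isotropic

variable {E : Type*} [NormedAddCommGroup E] [InnerProductSpace ℝ E] [MeasurableSpace E]
  [BorelSpace E] {μ : Measure E}

theorem integrable_inner_sq_of_integrable_norm_sq (hμ : Integrable (fun x => ‖x‖ ^ 2) μ)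
    (u : E) : Integrable (fun x => ⟪x, u⟫ ^ 2) μ := by
  refine (hμ.mul_const (‖u‖ ^ 2)).mono' (by fun_prop) (ae_of_all _ fun x => ?_)
  rw [norm_pow, Real.norm_eq_abs, ← mul_pow]
  exact pow_le_pow_left₀ (abs_nonneg _) (abs_real_inner_le_norm x u) 2

theorem integral_inner_sq_eq_of_norm_eq (hμ : ∀ e : E ≃ₗᵢ[ℝ] E, μ.map e = μ) {u w : E}
    (huw : ‖u‖ = ‖w‖) : ∫ x, ⟪x, u⟫ ^ 2 ∂μ = ∫ x, ⟪x, w⟫ ^ 2 ∂μ := by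
  let e := (ℝ ∙ (u - w))ᗮ.reflection
  have he : MeasurePreserving e μ μ := ⟨e.continuous.measurable, hμ e⟩
  calc ∫ x, ⟪x, u⟫ ^ 2 ∂μ = ∫ x, ⟪e x, e u⟫ ^ 2 ∂μ := by simp_rw [e.inner_map_map]
    _ = ∫ x, ⟪x, w⟫ ^ 2 ∂μ := by
      rw [he.integral_comp e.toHomeomorph.measurableEmbedding (fun x => ⟪x, e u⟫ ^ 2),
        Submodule.reflection_sub huw]

variable [FiniteDimensional ℝ E]

theorem finrank_mul_integral_inner_sq (hμ : ∀ e : E ≃ₗᵢ[ℝ] E, μ.map e = μ)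
    (hμ₂ : Integrable (fun x => ‖x‖ ^ 2) μ) (u : E) :
    finrank ℝ E * ∫ x, ⟪x, u⟫ ^ 2 ∂μ = ‖u‖ ^ 2 * ∫ x, ‖x‖ ^ 2 ∂μ := by
  let b := stdOrthonormalBasis ℝ E
  have hb : ∀ i, ‖u‖ = ‖‖u‖ • b i‖ := fun i => by simp [norm_smul, b.orthonormal.1 i]
  calc finrank ℝ E * ∫ x, ⟪x, u⟫ ^ 2 ∂μ = ∑ i, ∫ x, ⟪x, ‖u‖ • b i⟫ ^ 2 ∂μ := by
        simp_rw [← integral_inner_sq_eq_of_norm_eq hμ (hb _), Finset.sum_const,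
          Finset.card_univ, Fintype.card_fin, nsmul_eq_mul]
    _ = ∫ x, ‖u‖ ^ 2 * ‖x‖ ^ 2 ∂μ := by
        rw [← integral_finsetSum _ fun i _ => integrable_inner_sq_of_integrable_norm_sq hμ₂ _]
        simp_rw [real_inner_smul_right, mul_pow, ← Finset.mul_sum, b.sum_sq_inner_left]
    _ = ‖u‖ ^ 2 * ∫ x, ‖x‖ ^ 2 ∂μ := integral_const_mul _ _

theorem integral_inner_smul_self_eq_of_integral_inner_sq
    (hμ₂ : Integrable (fun x => ‖x‖ ^ 2) μ) (hμ : ∀ u, ∫ x, ⟪x, u⟫ ^ 2 ∂μ = ‖u‖ ^ 2) (θ : E) :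
    ∫ x, ⟪x, θ⟫ • x ∂μ = θ := by
  have hint : Integrable (fun x => ⟪x, θ⟫ • x) μ := by
    refine (hμ₂.const_mul ‖θ‖).mono' (by fun_prop) (ae_of_all _ fun x => ?_)
    rw [norm_smul, Real.norm_eq_abs, sq, ← mul_assoc]
    exact mul_le_mul_of_nonneg_right
      ((abs_real_inner_le_norm x θ).trans_eq (mul_comm _ _)) (norm_nonneg x)
  refine ext_inner_left ℝ fun v => ?_
  have hpol : ∀ x : E, ⟪v, ⟪x, θ⟫ • x⟫ = (⟪x, θ + v⟫ ^ 2 - ⟪x, θ - v⟫ ^ 2) / 4 := fun x => by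
    rw [real_inner_smul_right, inner_add_right, inner_sub_right, real_inner_comm v]
    ring
  have hsq := integrable_inner_sq_of_integrable_norm_sq hμ₂
  rw [← integral_inner hint, funext hpol, integral_div, integral_sub (hsq _) (hsq _), hμ, hμ,
    norm_add_sq_real, norm_sub_sq_real, real_inner_comm]
  ring

end Isotropic

section UniformBall

variable (d : ℕ)

instance inst_s3 : IsProbabilityMeasure (uniformBall d) := by
  constructor
  rw [uniformBall, Measure.smul_apply, Measure.restrict_apply_univ, smul_eq_mul]
  exact ENNReal.inv_mul_cancel (measure_closedBall_pos _ _ (by positivity)).ne'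
    measure_closedBall_lt_top.ne

theorem ae_norm_sq_le_uniformBall : ∀ᵐ x ∂uniformBall d, ‖x‖ ^ 2 ≤ d + 2 := by
  refine Measure.ae_smul_measure ((ae_restrict_mem measurableSet_closedBall).mono fun x hx => ?_) _
  exact (Real.le_sqrt (norm_nonneg x) (by positivity)).1 (mem_closedBall_zero_iff.1 hx)

theorem integrable_norm_sq_uniformBall : Integrable (fun x => ‖x‖ ^ 2) (uniformBall d) :=
  .of_bound (by fun_prop) (d + 2) <| (ae_norm_sq_le_uniformBall d).mono fun x hx => by
    rwa [Real.norm_of_nonneg (by positivity)]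

theorem map_uniformBall (e : EuclideanSpace ℝ (Fin d) ≃ₗᵢ[ℝ] EuclideanSpace ℝ (Fin d)) :
    (uniformBall d).map e = uniformBall d := by
  have hball : e ⁻¹' closedBall 0 √(d + 2) = closedBall 0 √(d + 2) := by
    ext x
    simp
  have he := (e.measurePreserving.restrict_preimage
    (measurableSet_closedBall (x := 0) (ε := √(d + 2)))).map_eq
  rw [hball] at he
  rw [uniformBall, Measure.map_smul, he]

variable [NeZero d]

theorem integral_norm_sq_uniformBall : ∫ x, ‖x‖ ^ 2 ∂uniformBall d = d := by
  have hvol : volume.real (closedBall (0 : EuclideanSpace ℝ (Fin d)) √(d + 2)) ≠ 0 :=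
    ENNReal.toReal_ne_zero.2 ⟨(measure_closedBall_pos _ _ (by positivity)).ne',
      measure_closedBall_lt_top.ne⟩
  rw [uniformBall, integral_smul_measure, setIntegral_closedBall_norm_sq volume (by positivity),
    finrank_euclideanSpace_fin, Real.sq_sqrt (by positivity), ENNReal.toReal_inv, smul_eq_mul,
    ← measureReal_def]
  field_simp

theorem integral_inner_sq_uniformBall (u : EuclideanSpace ℝ (Fin d)) :
    ∫ x, ⟪x, u⟫ ^ 2 ∂uniformBall d = ‖u‖ ^ 2 := by
  have h := finrank_mul_integral_inner_sq (map_uniformBall d) (integrable_norm_sq_uniformBall d) u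
  rw [finrank_euclideanSpace_fin, integral_norm_sq_uniformBall, mul_comm (‖u‖ ^ 2)] at h
  exact mul_left_cancel₀ (NeZero.ne _) h

theorem integral_inner_smul_self_uniformBall (θ : EuclideanSpace ℝ (Fin d)) :
    ∫ x, ⟪x, θ⟫ • x ∂uniformBall d = θ :=
  integral_inner_smul_self_eq_of_integral_inner_sq (integrable_norm_sq_uniformBall d)
    (integral_inner_sq_uniformBall d) θ

end UniformBall

section IIDSum

variable {α E : Type*} [MeasurableSpace α] [NormedAddCommGroup E] [InnerProductSpace ℝ E]

theorem integrable_inner_of_memLp_two {μ : Measure α} {f g : α → E} (hf : MemLp f 2 μ)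
    (hg : MemLp g 2 μ) : Integrable (fun x => ⟪f x, g x⟫) μ :=
  (L2.integrable_inner (𝕜 := ℝ) (hf.toLp f) (hg.toLp g)).congr <| by
    filter_upwards [hf.coeFn_toLp, hg.coeFn_toLp] with x hfx hgx
    rw [hfx, hgx]

variable [CompleteSpace E] [MeasurableSpace E] [BorelSpace E] {μ : Measure α}
  [IsProbabilityMeasure μ] {ι : Type*} [Fintype ι]

theorem integral_inner_comp_eval_pi_of_ne {Z : α → E} (hZ : MemLp Z 2 μ)
    (hZ₀ : ∫ x, Z x ∂μ = 0) {i j : ι} (hij : i ≠ j) :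
    ∫ xs, ⟪Z (xs i), Z (xs j)⟫ ∂Measure.pi (fun _ => μ) = 0 := by
  have hZi : ∀ k, Integrable (fun xs : ι → α => Z (xs k)) (Measure.pi fun _ => μ) := fun k =>
    (hZ.comp_measurePreserving (measurePreserving_eval _ k)).integrable one_le_two
  have hindep := (iIndepFun_pi (X := fun _ => Z) fun _ => hZ.1.aemeasurable).indepFun hij
  have h := hindep.integral_bilin (hZi i) (hZi j) (innerSL ℝ)
  change ∫ xs, innerSL ℝ (Z (xs i)) (Z (xs j)) ∂Measure.pi (fun _ => μ) = 0
  rw [h]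
  simp [integral_comp_eval (μ := fun _ => μ) hZ.1, hZ₀]

theorem integral_norm_sq_sum_pi {Z : α → E} (hZ : MemLp Z 2 μ) (hZ₀ : ∫ x, Z x ∂μ = 0) :
    ∫ xs, ‖∑ i, Z (xs i)‖ ^ 2 ∂Measure.pi (fun _ : ι => μ) =
      Fintype.card ι * ∫ x, ‖Z x‖ ^ 2 ∂μ := by
  have hZi : ∀ k, MemLp (fun xs : ι → α => Z (xs k)) 2 (Measure.pi fun _ => μ) := fun k =>
    hZ.comp_measurePreserving (measurePreserving_eval _ k)
  have hdiag : ∀ i : ι, ∑ j, ∫ xs, ⟪Z (xs i), Z (xs j)⟫ ∂Measure.pi (fun _ => μ) =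
      ∫ x, ‖Z x‖ ^ 2 ∂μ := fun i => by
    rw [Finset.sum_eq_single_of_mem i (Finset.mem_univ i) fun j _ hji =>
      integral_inner_comp_eval_pi_of_ne hZ hZ₀ hji.symm]
    simp_rw [real_inner_self_eq_norm_sq]
    exact integral_comp_eval (μ := fun _ => μ) (hZ.1.norm.pow 2)
  simp_rw [← real_inner_self_eq_norm_sq, sum_inner, inner_sum]
  rw [integral_finsetSum _ fun i _ =>
    integrable_finsetSum _ fun j _ => integrable_inner_of_memLp_two (hZi i) (hZi j)]
  simp_rw [integral_finsetSum _ fun j _ => integrable_inner_of_memLp_two (hZi _) (hZi j), hdiag,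
    Finset.sum_const, Finset.card_univ, nsmul_eq_mul, real_inner_self_eq_norm_sq]

end IIDSum

section Estimation

variable {d n : ℕ}

theorem memLp_inner_smul_self_uniformBall (θ : EuclideanSpace ℝ (Fin d)) :
    MemLp (fun x => ⟪x, θ⟫ • x) 2 (uniformBall d) := by
  refine .of_bound (by fun_prop) ((d + 2) * ‖θ‖) ?_
  filter_upwards [ae_norm_sq_le_uniformBall d] with x hx
  rw [norm_smul, Real.norm_eq_abs]
  calc |⟪x, θ⟫| * ‖x‖ ≤ ‖x‖ * ‖θ‖ * ‖x‖ := by gcongr; exact abs_real_inner_le_norm x θ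
    _ ≤ (d + 2) * ‖θ‖ := by nlinarith [norm_nonneg θ]

theorem integral_norm_sq_inner_smul_self_sub_uniformBall_le [NeZero d]
    {θ : EuclideanSpace ℝ (Fin d)} (hθ : ‖θ‖ = 1) :
    ∫ x, ‖⟪x, θ⟫ • x - θ‖ ^ 2 ∂uniformBall d ≤ d + 1 := by
  have hsq := integrable_inner_sq_of_integrable_norm_sq (integrable_norm_sq_uniformBall d) θ
  calc ∫ x, ‖⟪x, θ⟫ • x - θ‖ ^ 2 ∂uniformBall d ≤ ∫ x, (d * ⟪x, θ⟫ ^ 2 + 1) ∂uniformBall d := by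
        refine integral_mono_ae
          ((memLp_inner_smul_self_uniformBall θ).sub (memLp_const θ)).integrable_norm_pow'
          ((hsq.const_mul _).add (integrable_const _)) ?_
        filter_upwards [ae_norm_sq_le_uniformBall d] with x hx
        rw [norm_sub_sq_real, norm_smul, real_inner_smul_left, hθ, mul_pow, Real.norm_eq_abs,
          sq_abs]
        nlinarith [mul_le_mul_of_nonneg_left hx (sq_nonneg ⟪x, θ⟫)]
    _ = d + 1 := by
        rw [integral_add (hsq.const_mul _) (integrable_const _), integral_const_mul,
          integral_inner_sq_uniformBall, hθ]
        simp

theorem empiricalSecondMoment_sub_eq (hn : n ≠ 0) (θ : EuclideanSpace ℝ (Fin d))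
    (xs : Fin n → EuclideanSpace ℝ (Fin d)) :
    empiricalSecondMoment θ xs - θ = (n : ℝ)⁻¹ • ∑ i, (⟪xs i, θ⟫ • xs i - θ) := by
  rw [empiricalSecondMoment, Finset.sum_sub_distrib, Finset.sum_const, Finset.card_univ,
    Fintype.card_fin, smul_sub, ← Nat.cast_smul_eq_nsmul ℝ, smul_smul,
    inv_mul_cancel₀ (Nat.cast_ne_zero.2 hn), one_smul]

theorem integrable_norm_sq_empiricalSecondMoment_sub (θ : EuclideanSpace ℝ (Fin d)) :
    Integrable (fun xs => ‖empiricalSecondMoment θ xs - θ‖ ^ 2)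
      (Measure.pi fun _ : Fin n => uniformBall d) := by
  have hsum : MemLp (fun xs : Fin n → EuclideanSpace ℝ (Fin d) => ∑ i, ⟪xs i, θ⟫ • xs i) 2
      (Measure.pi fun _ => uniformBall d) :=
    memLp_finsetSum _ fun i _ =>
      (memLp_inner_smul_self_uniformBall θ).comp_measurePreserving (measurePreserving_eval _ i)
  exact ((hsum.const_smul (n : ℝ)⁻¹).sub (memLp_const θ)).integrable_norm_pow'

theorem integral_norm_sq_empiricalSecondMoment_sub_le [NeZero d] (hn : n ≠ 0)
    {θ : EuclideanSpace ℝ (Fin d)} (hθ : ‖θ‖ = 1) :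
    ∫ xs, ‖empiricalSecondMoment θ xs - θ‖ ^ 2 ∂Measure.pi (fun _ : Fin n => uniformBall d) ≤
      (d + 1) / n := by
  have hZ : MemLp (fun x => ⟪x, θ⟫ • x - θ) 2 (uniformBall d) :=
    (memLp_inner_smul_self_uniformBall θ).sub (memLp_const θ)
  have hZ₀ : ∫ x, (⟪x, θ⟫ • x - θ) ∂uniformBall d = 0 := by
    rw [integral_sub ((memLp_inner_smul_self_uniformBall θ).integrable one_le_two)
      (integrable_const θ), integral_inner_smul_self_uniformBall, integral_const]
    simp
  simp_rw [empiricalSecondMoment_sub_eq hn, norm_smul, mul_pow, integral_const_mul]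
  rw [integral_norm_sq_sum_pi hZ hZ₀, Fintype.card_fin, norm_inv, Real.norm_natCast]
  calc (n : ℝ)⁻¹ ^ 2 * (n * ∫ x, ‖⟪x, θ⟫ • x - θ‖ ^ 2 ∂uniformBall d) =
      (∫ x, ‖⟪x, θ⟫ • x - θ‖ ^ 2 ∂uniformBall d) / n := by field_simp
    _ ≤ (d + 1) / n := by gcongr; exact integral_norm_sq_inner_smul_self_sub_uniformBall_le hθ

theorem IsERM.sq_inner_sub_le {L : ℝ} {θ : EuclideanSpace ℝ (Fin d)}
    {θn : (Fin n → EuclideanSpace ℝ (Fin d)) → EuclideanSpace ℝ (Fin d)}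
    (hERM : IsERM d n L θ θn) (hθ : ‖θ‖ = 1) (hL₀ : 0 ≤ L) (hL₁ : L < 1)
    (xs : Fin n → EuclideanSpace ℝ (Fin d)) {x : EuclideanSpace ℝ (Fin d)}
    (hx : ‖x‖ ^ 2 ≤ d + 2) :
    (⟪x, θn xs⟫ - ⟪x, L • θ⟫) ^ 2 ≤ 4 * L ^ 2 * (d + 2) * ‖empiricalSecondMoment θ xs - θ‖ ^ 2 := by
  obtain ⟨hnorm, hmin⟩ := hERM xs
  have hopt := hmin (L • θ) (by rw [norm_smul, hθ, mul_one, Real.norm_of_nonneg hL₀])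
  replace hopt : ∑ i, (⟪xs i, θn xs⟫ - ⟪xs i, θ⟫) ^ 2 ≤ ∑ i, (⟪xs i, L • θ⟫ - ⟪xs i, θ⟫) ^ 2 := by
    rcases Nat.eq_zero_or_pos n with rfl | hn
    · simp
    · exact le_of_mul_le_mul_left hopt (by positivity)
  have hdist := norm_sub_smul_le_of_sum_sq_le hθ hL₀ hL₁ hnorm hopt
  calc (⟪x, θn xs⟫ - ⟪x, L • θ⟫) ^ 2 ≤ (‖x‖ * ‖θn xs - L • θ‖) ^ 2 := by
        rw [← inner_sub_right, ← sq_abs]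
        gcongr
        exact abs_real_inner_le_norm _ _
    _ ≤ (d + 2) * (2 * L * ‖empiricalSecondMoment θ xs - θ‖) ^ 2 := by
        rw [mul_pow]
        gcongr
    _ = 4 * L ^ 2 * (d + 2) * ‖empiricalSecondMoment θ xs - θ‖ ^ 2 := by ring

theorem ae_norm_sq_le_jointMeasure :
    ∀ᵐ ω ∂jointMeasure d n, ‖ω.2‖ ^ 2 ≤ d + 2 ∧ ∀ i, ‖ω.1 i‖ ^ 2 ≤ d + 2 := by
  refine (measurePreserving_snd.quasiMeasurePreserving.ae (ae_norm_sq_le_uniformBall d)).and ?_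
  refine measurePreserving_fst.quasiMeasurePreserving.ae
    (p := fun xs : Fin n → _ => ∀ i, ‖xs i‖ ^ 2 ≤ d + 2) ?_
  exact ae_all_iff.2 fun i =>
    (measurePreserving_eval (fun _ => uniformBall d) i).quasiMeasurePreserving.ae
      (p := fun x => ‖x‖ ^ 2 ≤ d + 2) (ae_norm_sq_le_uniformBall d)

theorem lintegral_norm_sq_empiricalSecondMoment_sub_le [NeZero d] (hn : n ≠ 0)
    {θ : EuclideanSpace ℝ (Fin d)} (hθ : ‖θ‖ = 1) {c : ℝ} (hc : 0 ≤ c) :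
    ∫⁻ ω, ENNReal.ofReal (c * ‖empiricalSecondMoment θ ω.1 - θ‖ ^ 2) ∂jointMeasure d n ≤
      ENNReal.ofReal (c * ((d + 1) / n)) := by
  have hmeas : Measurable fun xs : Fin n → EuclideanSpace ℝ (Fin d) =>
      ENNReal.ofReal (c * ‖empiricalSecondMoment θ xs - θ‖ ^ 2) := by
    unfold empiricalSecondMoment
    fun_prop
  rw [jointMeasure, measurePreserving_fst.lintegral_comp hmeas,
    ← ofReal_integral_eq_lintegral_ofReal
      ((integrable_norm_sq_empiricalSecondMoment_sub θ).const_mul c)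
      (ae_of_all _ fun _ => by positivity), integral_const_mul]
  exact ENNReal.ofReal_le_ofReal
    (mul_le_mul_of_nonneg_left (integral_norm_sq_empiricalSecondMoment_sub_le hn hθ) hc)

end Estimation

theorem add_two_mul_add_one_div_le {d n : ℕ} (hd : 1 ≤ d) (hn : 1 ≤ n) :
    ((d : ℝ) + 2) * (d + 1) / n ≤ 6 * d ^ 2 * (n : ℝ) ^ (-(2 : ℝ) / 3) := by
  have hn_rpow : (n : ℝ)⁻¹ ≤ (n : ℝ) ^ (-(2 : ℝ) / 3) := by
    rw [← Real.rpow_neg_one]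
    exact Real.rpow_le_rpow_of_exponent_le (by exact_mod_cast hn) (by norm_num)
  have hd₂ : ((d : ℝ) + 2) * (d + 1) ≤ 6 * d ^ 2 := by
    nlinarith [(by exact_mod_cast hd : (1 : ℝ) ≤ d)]
  rw [div_eq_mul_inv]
  gcongr

/-- **Estimation-error bound:** there is a universal constant `C > 0` such that
`T₁ := E[(f_n(x̃) − f_∞(x̃))²] + E[(f_n(x_NN) − f_∞(x_NN))²] ≤ C d² L² n^{−2/3}`,
where `f_∞(x) = ⟨x, L θ⋆⟩`. -/
theorem resmem_T1_bound :
    ∃ C : ℝ, 0 < C ∧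
      ∀ (d n : ℕ), 1 ≤ d → 1 ≤ n →
      ∀ (θstar : EuclideanSpace ℝ (Fin d)) (L : ℝ),
        ‖θstar‖ = 1 → 0 < L → L < 1 →
      ∀ (θn : (Fin n → EuclideanSpace ℝ (Fin d)) → EuclideanSpace ℝ (Fin d))
        (xNN : (Fin n → EuclideanSpace ℝ (Fin d)) × EuclideanSpace ℝ (Fin d) →
          EuclideanSpace ℝ (Fin d)),
        Measurable θn → Measurable xNN →
        IsERM d n L θstar θn → IsNN d n xNN →
        (∫⁻ ω, ENNReal.ofReal ((⟪ω.2, θn ω.1⟫ - ⟪ω.2, L • θstar⟫) ^ 2) ∂(jointMeasure d n))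
          + (∫⁻ ω, ENNReal.ofReal ((⟪xNN ω, θn ω.1⟫ - ⟪xNN ω, L • θstar⟫) ^ 2)
              ∂(jointMeasure d n))
        ≤ ENNReal.ofReal
            (C * (d : ℝ) ^ 2 * L ^ 2 * (n : ℝ) ^ (-(2 : ℝ) / 3)) := by
  refine ⟨48, by norm_num, fun d n hd hn θstar L hθ hL₀ hL₁ θn xNN _ _ hERM hNN => ?_⟩
  have : NeZero d := ⟨by omega⟩
  set G := fun ω : (Fin n → EuclideanSpace ℝ (Fin d)) × EuclideanSpace ℝ (Fin d) =>
    ENNReal.ofReal (4 * L ^ 2 * (d + 2) * ‖empiricalSecondMoment θstar ω.1 - θstar‖ ^ 2)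
  have htest : ∫⁻ ω, ENNReal.ofReal ((⟪ω.2, θn ω.1⟫ - ⟪ω.2, L • θstar⟫) ^ 2)
      ∂jointMeasure d n ≤ ∫⁻ ω, G ω ∂jointMeasure d n :=
    lintegral_mono_ae <| ae_norm_sq_le_jointMeasure.mono fun ω hω =>
      ENNReal.ofReal_le_ofReal (hERM.sq_inner_sub_le hθ hL₀.le hL₁ ω.1 hω.1)
  have hneighbor : ∫⁻ ω, ENNReal.ofReal ((⟪xNN ω, θn ω.1⟫ - ⟪xNN ω, L • θstar⟫) ^ 2)
      ∂jointMeasure d n ≤ ∫⁻ ω, G ω ∂jointMeasure d n :=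
    lintegral_mono_ae <| ae_norm_sq_le_jointMeasure.mono fun ω hω => by
      obtain ⟨j, hj, -⟩ := hNN ω
      exact ENNReal.ofReal_le_ofReal (hERM.sq_inner_sub_le hθ hL₀.le hL₁ ω.1 (hj ▸ hω.2 j))
  have hG : ∫⁻ ω, G ω ∂jointMeasure d n ≤ ENNReal.ofReal (4 * L ^ 2 * (d + 2) * ((d + 1) / n)) :=
    lintegral_norm_sq_empiricalSecondMoment_sub_le (by omega) hθ (by positivity)
  calc _ ≤ ∫⁻ ω, G ω ∂jointMeasure d n + ∫⁻ ω, G ω ∂jointMeasure d n :=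
        add_le_add htest hneighbor
    _ ≤ ENNReal.ofReal (4 * L ^ 2 * (d + 2) * ((d + 1) / n)) +
          ENNReal.ofReal (4 * L ^ 2 * (d + 2) * ((d + 1) / n)) := add_le_add hG hG
    _ = ENNReal.ofReal (8 * L ^ 2 * ((d + 2) * (d + 1) / n)) := by
      rw [← ENNReal.ofReal_add (by positivity) (by positivity)]
      ring_nf
    _ ≤ _ := ENNReal.ofReal_le_ofReal <| by
      nlinarith [mul_le_mul_of_nonneg_left (add_two_mul_add_one_div_le hd hn) (sq_nonneg L)]
end

section
/- There is a universal constant C > 0 such that the approximation-error term satisfies T_2 := E[(f_∞(x̃) − f⋆(x̃) − f_∞(x_NN) + f⋆(x_NN))²] ≤ C · d² (1 − L)² · ( log(n^{1/d}) / n )^{1/d}. -/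
/-!
The integrand is `(1 - L)² ⟪x̃ - x_NN, θ⋆⟫² ≤ (1 - L)² ‖x̃ - x_NN‖²`. Put `R = √(d+2)` and
`q = (log n / n)^{1/d}`. A ball of radius `s = 2Rq` centred at a point of the support contains
a ball of radius `s/2` inside the support, so it has mass at least `(s/(2R))^d = log n / n`.
Hence no sample falls within `s` of `x̃` with probability at most `(1 - log n / n)^n ≤ 1/n`,
and otherwise `‖x̃ - x_NN‖ ≤ 2R`; so `E ‖x̃ - x_NN‖² ≤ 4(d+2)(q² + 1/n)`, which is
`O(d² (log(n^{1/d})/n)^{1/d})`.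
-/

open MeasureTheory
open scoped RealInnerProductSpace ENNReal

open Metric ProbabilityTheory Module

section HaarBall

variable {E : Type*} [NormedAddCommGroup E] [NormedSpace ℝ E]

lemma closedBall_smul_subset_closedBall_inter {x : E} {R s : ℝ} (hR : 0 < R) (hx : ‖x‖ ≤ R)
    (hs : 0 ≤ s) (hsR : s ≤ 2 * R) :
    closedBall ((1 - s / (2 * R)) • x) (s / 2) ⊆ closedBall x s ∩ closedBall 0 R := by
  set t := s / (2 * R)
  have ht0 : 0 ≤ t := by positivity
  have ht1 : t ≤ 1 := (div_le_one (by positivity)).2 hsR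
  have htR : t * R = s / 2 := by simp only [t]; field_simp
  intro y hy
  rw [mem_closedBall, dist_eq_norm] at hy
  have hshift : ‖(1 - t) • x - x‖ ≤ s / 2 := by
    rw [show (1 - t) • x - x = -(t • x) by module, norm_neg, norm_smul, Real.norm_of_nonneg ht0,
      ← htR]
    exact mul_le_mul_of_nonneg_left hx ht0
  have hcentre : ‖(1 - t) • x‖ ≤ R - s / 2 := by
    rw [norm_smul, Real.norm_of_nonneg (by linarith), ← htR]
    nlinarith
  refine ⟨?_, ?_⟩
  · rw [mem_closedBall, dist_eq_norm]
    calc ‖y - x‖ = ‖(y - (1 - t) • x) + ((1 - t) • x - x)‖ := by rw [sub_add_sub_cancel]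
      _ ≤ s := (norm_add_le _ _).trans (by linarith)
  · rw [mem_closedBall, dist_zero_right]
    calc ‖y‖ ≤ ‖(1 - t) • x‖ + ‖y - (1 - t) • x‖ := norm_le_insert' _ _
      _ ≤ R := by linarith

variable [FiniteDimensional ℝ E] [MeasurableSpace E] [BorelSpace E]
  (μ : Measure E) [μ.IsAddHaarMeasure]

lemma ofReal_div_pow_finrank_le_cond_closedBall {x : E} {R s : ℝ} (hR : 0 < R) (hx : ‖x‖ ≤ R)
    (hs : 0 ≤ s) (hsR : s ≤ 2 * R) :
    ENNReal.ofReal ((s / (2 * R)) ^ finrank ℝ E) ≤ μ[closedBall x s | closedBall 0 R] := by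
  have hB0 : μ (closedBall 0 R) ≠ 0 := (measure_closedBall_pos μ 0 hR).ne'
  have hBtop : μ (closedBall 0 R) ≠ ⊤ := measure_closedBall_lt_top.ne
  rw [cond_apply measurableSet_closedBall, ← ENNReal.mul_le_iff_le_inv hB0 hBtop, Set.inter_comm]
  calc μ (closedBall 0 R) * ENNReal.ofReal ((s / (2 * R)) ^ finrank ℝ E)
      = μ (closedBall ((1 - s / (2 * R)) • x) (s / 2)) := by
        rw [Measure.addHaar_closedBall μ _ hR.le, Measure.addHaar_closedBall μ _ (by positivity),
          mul_right_comm, ← ENNReal.ofReal_mul (by positivity), ← mul_pow]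
        congr 3
        field_simp
    _ ≤ μ (closedBall x s ∩ closedBall 0 R) :=
        measure_mono (closedBall_smul_subset_closedBall_inter hR hx hs hsR)

end HaarBall

section NearestNeighbour

variable {ι : Type*} [Fintype ι]

lemma ae_prod_pi_mem {X : Type*} [MeasurableSpace X] {ν : Measure X} [SigmaFinite ν] {K : Set X}
    (hK : ∀ᵐ x ∂ν, x ∈ K) :
    ∀ᵐ ω ∂(Measure.pi (fun _ : ι ↦ ν)).prod ν, ω.2 ∈ K ∧ ∀ i, ω.1 i ∈ K :=
  (Measure.quasiMeasurePreserving_snd.ae hK).and <| ae_all_iff.2 fun i ↦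
    Measure.quasiMeasurePreserving_fst.ae ((Measure.quasiMeasurePreserving_eval _ i).ae hK)

variable {E : Type*} [NormedAddCommGroup E] [MeasurableSpace E] [OpensMeasurableSpace E]
  [SecondCountableTopology E]

lemma measurableSet_setOf_forall_lt_dist (s : ℝ) :
    MeasurableSet {ω : (ι → E) × E | ∀ i, s < dist ω.2 (ω.1 i)} := by
  rw [Set.ofPred_forall]
  exact .iInter fun i ↦ measurableSet_lt measurable_const
    (measurable_snd.dist ((measurable_pi_apply i).comp measurable_fst))

lemma prod_pi_setOf_forall_lt_dist_le (ν : Measure E) [IsProbabilityMeasure ν] {s : ℝ} {p : ℝ≥0∞}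
    (hp : ∀ᵐ x ∂ν, p ≤ ν (closedBall x s)) :
    (Measure.pi (fun _ : ι ↦ ν)).prod ν {ω | ∀ i, s < dist ω.2 (ω.1 i)} ≤
      (1 - p) ^ Fintype.card ι := by
  rw [Measure.prod_apply_symm (measurableSet_setOf_forall_lt_dist s)]
  refine (lintegral_mono_ae (g := fun _ ↦ (1 - p) ^ Fintype.card ι) ?_).trans_eq (by simp)
  filter_upwards [hp] with y hy
  have hslice : (fun xs ↦ (xs, y)) ⁻¹' {ω : (ι → E) × E | ∀ i, s < dist ω.2 (ω.1 i)} =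
      Set.univ.pi fun _ ↦ (closedBall y s)ᶜ := by
    ext xs
    simp [dist_comm]
  rw [hslice, Measure.pi_pi, Finset.prod_const, Finset.card_univ,
    prob_compl_eq_one_sub measurableSet_closedBall]
  gcongr

lemma lintegral_sq_norm_sub_nearest_le (ν : Measure E) [IsProbabilityMeasure ν] {R s : ℝ}
    {p : ℝ≥0∞} (hν : ∀ᵐ x ∂ν, ‖x‖ ≤ R) (hp : ∀ᵐ x ∂ν, p ≤ ν (closedBall x s))
    (xNN : (ι → E) × E → E)
    (hNN : ∀ ω, ∃ j, xNN ω = ω.1 j ∧ ∀ i, ‖ω.2 - xNN ω‖ ≤ ‖ω.2 - ω.1 i‖) :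
    ∫⁻ ω, ENNReal.ofReal (‖ω.2 - xNN ω‖ ^ 2) ∂(Measure.pi (fun _ : ι ↦ ν)).prod ν ≤
      ENNReal.ofReal (s ^ 2) + ENNReal.ofReal ((2 * R) ^ 2) * (1 - p) ^ Fintype.card ι := by
  set M := {ω : (ι → E) × E | ∀ i, s < dist ω.2 (ω.1 i)}
  have hpoint : ∀ᵐ ω ∂(Measure.pi (fun _ : ι ↦ ν)).prod ν, ENNReal.ofReal (‖ω.2 - xNN ω‖ ^ 2) ≤
      ENNReal.ofReal (s ^ 2) + M.indicator (fun _ ↦ ENNReal.ofReal ((2 * R) ^ 2)) ω := by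
    filter_upwards [ae_prod_pi_mem (K := {x | ‖x‖ ≤ R}) hν] with ω ⟨hy, hxs⟩
    obtain ⟨j, hj, hmin⟩ := hNN ω
    by_cases hω : ω ∈ M
    · rw [Set.indicator_of_mem hω]
      refine le_add_left (ENNReal.ofReal_le_ofReal (pow_le_pow_left₀ (norm_nonneg _) ?_ 2))
      rw [hj]
      linarith [norm_sub_le ω.2 (ω.1 j), hxs j, show ‖ω.2‖ ≤ R from hy]
    · obtain ⟨i, hi⟩ : ∃ i, dist ω.2 (ω.1 i) ≤ s := by simpa [M] using hω
      rw [Set.indicator_of_notMem hω, add_zero]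
      refine ENNReal.ofReal_le_ofReal (pow_le_pow_left₀ (norm_nonneg _) ?_ 2)
      exact (hmin i).trans (by rwa [← dist_eq_norm])
  calc ∫⁻ ω, ENNReal.ofReal (‖ω.2 - xNN ω‖ ^ 2) ∂(Measure.pi (fun _ : ι ↦ ν)).prod ν
      ≤ ∫⁻ ω, ENNReal.ofReal (s ^ 2) + M.indicator (fun _ ↦ ENNReal.ofReal ((2 * R) ^ 2)) ω
          ∂(Measure.pi (fun _ : ι ↦ ν)).prod ν := lintegral_mono_ae hpoint
    _ = ENNReal.ofReal (s ^ 2) + ENNReal.ofReal ((2 * R) ^ 2) *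
          (Measure.pi (fun _ : ι ↦ ν)).prod ν M := by
        rw [lintegral_add_left measurable_const, lintegral_const, measure_univ, mul_one,
          lintegral_indicator_const (measurableSet_setOf_forall_lt_dist s)]
    _ ≤ _ := by gcongr; exact prod_pi_setOf_forall_lt_dist_le ν hp

end NearestNeighbour

lemma inner_sub_smul_sq_le {F : Type*} [NormedAddCommGroup F] [InnerProductSpace ℝ F] {θ : F}
    (hθ : ‖θ‖ ≤ 1) (L : ℝ) (v w : F) :
    (⟪v, L • θ⟫ - ⟪v, θ⟫ - ⟪w, L • θ⟫ + ⟪w, θ⟫) ^ 2 ≤ (1 - L) ^ 2 * ‖v - w‖ ^ 2 := by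
  have hfactor : ⟪v, L • θ⟫ - ⟪v, θ⟫ - ⟪w, L • θ⟫ + ⟪w, θ⟫ = (L - 1) * ⟪v - w, θ⟫ := by
    rw [real_inner_smul_right, real_inner_smul_right, inner_sub_left]
    ring
  have hinner : |⟪v - w, θ⟫| ≤ ‖v - w‖ :=
    (abs_real_inner_le_norm _ _).trans (mul_le_of_le_one_right (norm_nonneg _) hθ)
  rw [hfactor, mul_pow, ← sq_abs ⟪v - w, θ⟫, show (L - 1) ^ 2 = (1 - L) ^ 2 by ring]
  gcongr

instance (d : ℕ) : IsProbabilityMeasure (uniformBall d) :=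
  cond_isProbabilityMeasure_of_finite (measure_closedBall_pos _ _ (by positivity)).ne'
    measure_closedBall_lt_top.ne

lemma lintegral_sq_norm_sub_nn_le {d n : ℕ} {xNN} (hNN : IsNN d n xNN) {q : ℝ} (hq0 : 0 ≤ q)
    (hq1 : q ≤ 1) :
    ∫⁻ ω, ENNReal.ofReal (‖ω.2 - xNN ω‖ ^ 2) ∂jointMeasure d n ≤
      ENNReal.ofReal (4 * (d + 2) * (q ^ 2 + (1 - q ^ d) ^ n)) := by
  set R := Real.sqrt (d + 2)
  have hR : 0 < R := by positivity
  have hRsq : R ^ 2 = d + 2 := Real.sq_sqrt (by positivity)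
  have hsupp : ∀ᵐ x ∂uniformBall d, ‖x‖ ≤ R := by
    filter_upwards [ae_cond_mem measurableSet_closedBall] with x hx
    simpa using hx
  have hmass : ∀ᵐ x ∂uniformBall d,
      ENNReal.ofReal (q ^ d) ≤ uniformBall d (closedBall x (2 * R * q)) := by
    filter_upwards [hsupp] with x hx
    have := ofReal_div_pow_finrank_le_cond_closedBall volume (s := 2 * R * q) hR hx
      (by positivity) (by nlinarith)
    rwa [finrank_euclideanSpace_fin, mul_div_cancel_left₀ _ (by positivity)] at this
  calc _ ≤ ENNReal.ofReal ((2 * R * q) ^ 2) +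
        ENNReal.ofReal ((2 * R) ^ 2) * (1 - ENNReal.ofReal (q ^ d)) ^ n := by
        simpa only [jointMeasure, Fintype.card_fin] using
          lintegral_sq_norm_sub_nearest_le (uniformBall d) hsupp hmass xNN hNN
    _ = _ := by
        have hqd : q ^ d ≤ 1 := pow_le_one₀ hq0 hq1
        rw [← ENNReal.ofReal_one, ← ENNReal.ofReal_sub _ (by positivity),
          ← ENNReal.ofReal_pow (by linarith), ← ENNReal.ofReal_mul (by positivity),
          ← ENNReal.ofReal_add (by positivity) (by positivity)]
        congr 1
        rw [mul_pow, mul_pow, hRsq]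
        ring

lemma one_sub_log_div_pow_le_inv {n : ℕ} (hn : n ≠ 0) : (1 - Real.log n / n) ^ n ≤ (n : ℝ)⁻¹ :=
  calc _ ≤ Real.exp (-Real.log n) :=
        Real.one_sub_div_pow_le_exp_neg (Real.log_le_self n.cast_nonneg)
    _ = (n : ℝ)⁻¹ := by rw [Real.exp_neg, Real.exp_log (by positivity)]

lemma rpow_inv_le_two_mul_rpow_inv {a b : ℝ} {d : ℕ} (ha : 0 ≤ a) (hb : 0 ≤ b) (hd : d ≠ 0)
    (hab : a ≤ 2 ^ d * b) : a ^ (d : ℝ)⁻¹ ≤ 2 * b ^ (d : ℝ)⁻¹ :=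
  calc a ^ (d : ℝ)⁻¹ ≤ (2 ^ d * b) ^ (d : ℝ)⁻¹ := by gcongr
    _ = 2 * b ^ (d : ℝ)⁻¹ := by
        rw [Real.mul_rpow (by positivity) hb, Real.pow_rpow_inv_natCast zero_le_two hd]

lemma sq_rpow_inv_log_div_add_inv_le {d n : ℕ} (hd : d ≠ 0) (hn : 2 ≤ n) :
    4 * (d + 2) * (((Real.log n / n) ^ (d : ℝ)⁻¹) ^ 2 + (n : ℝ)⁻¹) ≤
      72 * d ^ 2 * (Real.log ((n : ℝ) ^ (d : ℝ)⁻¹) / n) ^ (d : ℝ)⁻¹ := by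
  set p := Real.log n / n
  set t := Real.log ((n : ℝ) ^ (d : ℝ)⁻¹) / n
  set q := p ^ (d : ℝ)⁻¹
  have hn2 : (2 : ℝ) ≤ n := by exact_mod_cast hn
  have hd1 : (1 : ℝ) ≤ d := by exact_mod_cast Nat.one_le_iff_ne_zero.2 hd
  have hlog : 1 / 2 ≤ Real.log n :=
    (Real.log_two_gt_d9.le.trans' (by norm_num)).trans (Real.log_le_log two_pos hn2)
  have hp : 0 ≤ p := by positivity
  have htp : t = p / d := by
    simp only [p, t, Real.log_rpow (by positivity : (0 : ℝ) < n)]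
    field_simp
  have ht : 0 ≤ t := htp ▸ by positivity
  have hq1 : q ≤ 1 := Real.rpow_le_one hp (div_le_one_of_le₀ (Real.log_le_self (by positivity))
    (by positivity)) (by positivity)
  have hqr : q ≤ 2 * t ^ (d : ℝ)⁻¹ := by
    refine rpow_inv_le_two_mul_rpow_inv hp ht hd ?_
    calc p = d * t := by rw [htp]; field_simp
      _ ≤ 2 ^ d * t := by gcongr; exact_mod_cast Nat.lt_two_pow_self.le
  have hinv : (n : ℝ)⁻¹ ≤ 2 * q := by
    rw [← Real.pow_rpow_inv_natCast (by positivity : (0 : ℝ) ≤ (n : ℝ)⁻¹) hd]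
    refine rpow_inv_le_two_mul_rpow_inv (by positivity) hp hd ?_
    calc (n : ℝ)⁻¹ ^ d ≤ (n : ℝ)⁻¹ :=
          pow_le_of_le_one (by positivity) (inv_le_one_of_one_le₀ (by linarith)) hd
      _ ≤ 2 * p := by
          rw [mul_div_assoc', le_div_iff₀ (by positivity), inv_mul_cancel₀ (by positivity)]
          linarith
      _ ≤ 2 ^ d * p := by gcongr; exact le_self_pow₀ one_le_two hd
  have hq : 0 ≤ q := by positivity
  calc 4 * (d + 2) * (q ^ 2 + (n : ℝ)⁻¹) ≤ 4 * (d + 2) * (q + 2 * q) := by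
        gcongr
        exact pow_le_of_le_one hq hq1 two_ne_zero
    _ = 12 * (d + 2) * q := by ring
    _ ≤ 12 * (3 * d ^ 2) * (2 * t ^ (d : ℝ)⁻¹) := by gcongr; nlinarith
    _ = 72 * d ^ 2 * t ^ (d : ℝ)⁻¹ := by ring

/-- **Approximation-error bound:** there is a universal constant `C > 0` such that
`T₂ := E[(f_∞(x̃) − f⋆(x̃) − f_∞(x_NN) + f⋆(x_NN))²]`
`≤ C d² (1 − L)² (log(n^{1/d})/n)^{1/d}`,
where `f⋆(x) = ⟨x, θ⋆⟩` and `f_∞(x) = ⟨x, L θ⋆⟩`. -/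
theorem resmem_T2_bound :
    ∃ C : ℝ, 0 < C ∧
      ∀ (d n : ℕ), 1 ≤ d → 2 ≤ n →
      ∀ (θstar : EuclideanSpace ℝ (Fin d)) (L : ℝ),
        ‖θstar‖ = 1 → 0 < L → L < 1 →
      ∀ xNN : (Fin n → EuclideanSpace ℝ (Fin d)) × EuclideanSpace ℝ (Fin d) →
          EuclideanSpace ℝ (Fin d),
        Measurable xNN → IsNN d n xNN →
        ∫⁻ ω, ENNReal.ofReal
            ((⟪ω.2, L • θstar⟫ - ⟪ω.2, θstar⟫ - ⟪xNN ω, L • θstar⟫ + ⟪xNN ω, θstar⟫) ^ 2)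
          ∂(jointMeasure d n)
        ≤ ENNReal.ofReal
            (C * (d : ℝ) ^ 2 * (1 - L) ^ 2 *
              (Real.log ((n : ℝ) ^ ((d : ℝ)⁻¹)) / (n : ℝ)) ^ ((d : ℝ)⁻¹)) := by
  refine ⟨72, by norm_num, fun d n hd hn θstar L hθ _ _ xNN _ hNN ↦ ?_⟩
  have hd0 : d ≠ 0 := Nat.one_le_iff_ne_zero.1 hd
  set p := Real.log n / n
  have hp : 0 ≤ p := by positivity
  have hp1 : p ≤ 1 := div_le_one_of_le₀ (Real.log_le_self (by positivity)) (by positivity)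
  have hpd : (p ^ (d : ℝ)⁻¹) ^ d = p := Real.rpow_inv_natCast_pow hp hd0
  calc _ ≤ ∫⁻ ω, ENNReal.ofReal ((1 - L) ^ 2) * ENNReal.ofReal (‖ω.2 - xNN ω‖ ^ 2)
          ∂jointMeasure d n := lintegral_mono fun ω ↦ by
        rw [← ENNReal.ofReal_mul (by positivity)]
        exact ENNReal.ofReal_le_ofReal (inner_sub_smul_sq_le hθ.le L _ _)
    _ = ENNReal.ofReal ((1 - L) ^ 2) *
          ∫⁻ ω, ENNReal.ofReal (‖ω.2 - xNN ω‖ ^ 2) ∂jointMeasure d n :=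
        lintegral_const_mul' _ _ ENNReal.ofReal_ne_top
    _ ≤ ENNReal.ofReal ((1 - L) ^ 2) *
          ENNReal.ofReal (4 * (d + 2) * ((p ^ (d : ℝ)⁻¹) ^ 2 + (1 - p) ^ n)) := by
        grw [lintegral_sq_norm_sub_nn_le hNN (q := p ^ (d : ℝ)⁻¹) (by positivity)
          (Real.rpow_le_one hp hp1 (by positivity)), hpd]
    _ ≤ _ := by
        rw [← ENNReal.ofReal_mul (by positivity)]
        refine ENNReal.ofReal_le_ofReal ?_
        grw [one_sub_log_div_pow_le_inv (by omega), sq_rpow_inv_log_div_add_inv_le hd0 hn]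
        exact (by ring : _ = _).le
end

section
/- Suppose the empirical covariance matrix Σ_n = (1/n) Σ_{i=1}^n x_i x_iᵀ is invertible, ‖θ⋆‖ = 1 and 0 < L < 1. Then every minimizer θ_n of the constrained empirical risk (1/n) Σ_{i=1}^n (⟨x_i, θ⟩ − ⟨x_i, θ⋆⟩)² over {θ : ‖θ‖ ≤ L} satisfies ‖θ_n‖ = L, and there exists λ_n > 0 such that θ_n = (Σ_n + λ_n I)^{-1} Σ_n θ⋆. -/
/-!
The risk is the quadratic form of `Σ_n` centred at `θ⋆`. At a minimiser `θ_n` over the ball, the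
first-order condition says that `θ_n` also minimises the linear functional `⟪g, ·⟫` over the ball,
where `g = Σ_n (θ_n - θ⋆)` is the gradient; `g ≠ 0` because `Σ_n` is injective and `θ⋆` lies
outside the ball. Testing against `-(L / ‖g‖) • g` gives `⟪g, θ_n⟫ ≤ -L ‖g‖`. Cauchy–Schwarz then
forces `‖θ_n‖ = L`, after which `‖g + (‖g‖ / L) • θ_n‖² ≤ 0`, i.e. `Σ_n θ_n + λ θ_n = Σ_n θ⋆`
with `λ = ‖g‖ / L`. Since `Σ_n` is positive semidefinite, `Σ_n + λ I` is invertible.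
-/

open Matrix Filter Topology Metric RealInnerProductSpace WithLp

lemma nonneg_of_forall_nonneg_add_mul {a b : ℝ} (h : ∀ t : ℝ, 0 < t → t ≤ 1 → 0 ≤ a + t * b) :
    0 ≤ a := by
  have hlim : Tendsto (fun t : ℝ ↦ a + t * b) (𝓝[>] 0) (𝓝 a) := by
    have hcont : Continuous fun t : ℝ ↦ a + t * b := by fun_prop
    simpa using (hcont.tendsto 0).mono_left nhdsWithin_le_nhds
  refine ge_of_tendsto hlim ?_
  filter_upwards [Ioc_mem_nhdsGT one_pos] with t ht using h t ht.1 ht.2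

section InnerProductSpace

variable {E : Type*} [NormedAddCommGroup E] [InnerProductSpace ℝ E]

lemma inner_le_neg_mul_norm_of_isMinOn_closedBall {g θmin : E} {L : ℝ} (hL : 0 ≤ L)
    (hmin : IsMinOn (⟪g, ·⟫) (closedBall 0 L) θmin) : ⟪g, θmin⟫ ≤ -(L * ‖g‖) := by
  rcases eq_or_ne g 0 with rfl | hg
  · simp
  have hg_pos : 0 < ‖g‖ := norm_pos_iff.mpr hg
  have hmem : -(L / ‖g‖) • g ∈ closedBall (0 : E) L := by
    rw [mem_closedBall_zero_iff, norm_smul, norm_neg, Real.norm_of_nonneg (by positivity),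
      div_mul_cancel₀ _ hg_pos.ne']
  calc ⟪g, θmin⟫ ≤ ⟪g, -(L / ‖g‖) • g⟫ := isMinOn_iff.mp hmin _ hmem
    _ = -(L * ‖g‖) := by rw [inner_smul_right, real_inner_self_eq_norm_sq]; field_simp

lemma norm_eq_and_add_smul_eq_zero_of_inner_le {g θ : E} {L : ℝ} (hL : 0 < L) (hg : g ≠ 0)
    (hθ : ‖θ‖ ≤ L) (hinner : ⟪g, θ⟫ ≤ -(L * ‖g‖)) :
    ‖θ‖ = L ∧ g + (‖g‖ / L) • θ = 0 := by
  have hg_pos : 0 < ‖g‖ := norm_pos_iff.mpr hg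
  have hCS : -(‖g‖ * ‖θ‖) ≤ ⟪g, θ⟫ := neg_le_of_abs_le (abs_real_inner_le_norm g θ)
  have hθL : ‖θ‖ = L := le_antisymm hθ (le_of_mul_le_mul_left (by linarith) hg_pos)
  refine ⟨hθL, norm_eq_zero.mp <| (pow_eq_zero_iff two_ne_zero).mp <|
    le_antisymm ?_ (by positivity)⟩
  rw [norm_add_sq_real, inner_smul_right, norm_smul, Real.norm_of_nonneg (by positivity), hθL]
  have hscaled : ‖g‖ / L * ⟪g, θ⟫ ≤ ‖g‖ / L * -(L * ‖g‖) :=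
    mul_le_mul_of_nonneg_left hinner (by positivity)
  field_simp at hscaled ⊢
  nlinarith

namespace LinearMap.IsSymmetric

variable {T : E →ₗ[ℝ] E}

lemma inner_map_add_smul_add_smul (hT : T.IsSymmetric) (u v : E) (t : ℝ) :
    ⟪T (u + t • v), u + t • v⟫ = ⟪T u, u⟫ + 2 * t * ⟪T u, v⟫ + t ^ 2 * ⟪T v, v⟫ := by
  have hswap : ⟪T v, u⟫ = ⟪T u, v⟫ := by rw [hT, real_inner_comm]
  simp only [map_add, map_smul, inner_add_left, inner_add_right, inner_smul_left,
    inner_smul_right, hswap, RCLike.conj_to_real]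
  ring

lemma inner_map_sub_nonneg_of_isMinOn (hT : T.IsSymmetric) {K : Set E} (hK : Convex ℝ K)
    {c θmin θ : E} (hmin : IsMinOn (fun θ ↦ ⟪T (θ - c), θ - c⟫) K θmin) (hθmin : θmin ∈ K)
    (hθ : θ ∈ K) : 0 ≤ ⟪T (θmin - c), θ - θmin⟫ := by
  refine nonneg_of_forall_nonneg_add_mul (b := ⟪T (θ - θmin), θ - θmin⟫ / 2) fun t ht0 ht1 ↦ ?_
  have hle := isMinOn_iff.mp hmin _ (hK.add_smul_sub_mem hθmin hθ ⟨ht0.le, ht1⟩)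
  simp only [add_sub_right_comm θmin, hT.inner_map_add_smul_add_smul] at hle
  nlinarith

theorem kkt_of_isMinOn_closedBall (hT : T.IsSymmetric) (hT_inj : Function.Injective T)
    {c θmin : E} {L : ℝ} (hL : 0 < L) (hc : L < ‖c‖) (hθmin : θmin ∈ closedBall 0 L)
    (hmin : IsMinOn (fun θ ↦ ⟪T (θ - c), θ - c⟫) (closedBall 0 L) θmin) :
    ‖θmin‖ = L ∧ ∃ lam : ℝ, 0 < lam ∧ T θmin + lam • θmin = T c := by
  set g := T (θmin - c)
  have hg : g ≠ 0 := by
    refine (map_ne_zero_iff T hT_inj).mpr (sub_ne_zero.mpr ?_)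
    rintro rfl
    exact (mem_closedBall_zero_iff.mp hθmin).not_gt hc
  have hlin : IsMinOn (⟪g, ·⟫) (closedBall 0 L) θmin := isMinOn_iff.mpr fun θ hθ ↦ by
    simpa only [inner_sub_right, sub_nonneg] using
      hT.inner_map_sub_nonneg_of_isMinOn (convex_closedBall 0 L) hmin hθmin hθ
  obtain ⟨hnorm, hkkt⟩ := norm_eq_and_add_smul_eq_zero_of_inner_le hL hg
    (mem_closedBall_zero_iff.mp hθmin) (inner_le_neg_mul_norm_of_isMinOn_closedBall hL.le hlin)
  refine ⟨hnorm, ‖g‖ / L, div_pos (norm_pos_iff.mpr hg) hL, ?_⟩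
  have hg_sub : g = T θmin - T c := map_sub T θmin c
  linear_combination (norm := module) hkkt - hg_sub

end LinearMap.IsSymmetric

end InnerProductSpace

lemma EuclideanSpace.norm_eq_sqrt_ofLp_dotProduct {ι : Type*} [Fintype ι]
    (u : EuclideanSpace ℝ ι) : ‖u‖ = √(ofLp u ⬝ᵥ ofLp u) := by
  rw [norm_eq_sqrt_real_inner, EuclideanSpace.inner_eq_star_dotProduct, star_trivial]

namespace Matrix

variable {ι : Type*} [Fintype ι]

lemma inner_toEuclideanLin_self [DecidableEq ι] (A : Matrix ι ι ℝ) (u : EuclideanSpace ℝ ι) :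
    ⟪toEuclideanLin A u, u⟫ = ofLp u ⬝ᵥ A *ᵥ ofLp u := by
  rw [EuclideanSpace.inner_eq_star_dotProduct, star_trivial]
  rfl

lemma dotProduct_sum_vecMulVec_self_mulVec {κ R : Type*} [Fintype κ] [CommSemiring R]
    (x : κ → ι → R) (v : ι → R) :
    v ⬝ᵥ (∑ k, vecMulVec (x k) (x k)) *ᵥ v = ∑ k, (x k ⬝ᵥ v) ^ 2 := by
  rw [sum_mulVec, dotProduct_sum]
  refine Finset.sum_congr rfl fun k _ ↦ ?_
  rw [vecMulVec_mulVec, op_smul_eq_smul, dotProduct_smul, smul_eq_mul, dotProduct_comm, sq]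

lemma posSemidef_sum_vecMulVec_self {κ : Type*} [Fintype κ] (x : κ → ι → ℝ) :
    (∑ k, vecMulVec (x k) (x k)).PosSemidef :=
  posSemidef_sum _ fun k _ ↦ by simpa using posSemidef_vecMulVec_self_star (x k)

open EuclideanSpace in
theorem PosSemidef.kkt_of_isMinOn_ball [DecidableEq ι] {A : Matrix ι ι ℝ} (hA : A.PosSemidef)
    (hdet : IsUnit A.det) {c θmin : ι → ℝ} {L : ℝ} (hL : 0 < L) (hc : L < √(c ⬝ᵥ c))
    (hθmin : √(θmin ⬝ᵥ θmin) ≤ L)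
    (hmin : IsMinOn (fun θ ↦ (θ - c) ⬝ᵥ A *ᵥ (θ - c)) {θ | √(θ ⬝ᵥ θ) ≤ L} θmin) :
    √(θmin ⬝ᵥ θmin) = L ∧ ∃ lam : ℝ, 0 < lam ∧ θmin = (A + lam • 1)⁻¹ *ᵥ (A *ᵥ c) := by
  have hT : (toEuclideanLin A).IsSymmetric := isSymmetric_toEuclideanLin_iff.mpr hA.isHermitian
  have hT_inj : Function.Injective (toEuclideanLin A) := fun u v huv ↦
    ofLp_injective 2 <| mulVec_injective_iff_isUnit.mpr ((isUnit_iff_isUnit_det A).mpr hdet)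
      (congrArg ofLp huv)
  have hmin' : IsMinOn (fun θ ↦ ⟪toEuclideanLin A (θ - toLp 2 c), θ - toLp 2 c⟫)
      (closedBall 0 L) (toLp 2 θmin) := isMinOn_iff.mpr fun θ hθ ↦ by
    simpa only [inner_toEuclideanLin_self, ofLp_sub, ofLp_toLp] using
      isMinOn_iff.mp hmin (ofLp θ) (by simpa [norm_eq_sqrt_ofLp_dotProduct] using hθ)
  obtain ⟨hnorm, lam, hlam, hkkt⟩ := hT.kkt_of_isMinOn_closedBall hT_inj hL
    (by simpa [norm_eq_sqrt_ofLp_dotProduct] using hc)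
    (by simpa [norm_eq_sqrt_ofLp_dotProduct] using hθmin) hmin'
  refine ⟨by simpa [norm_eq_sqrt_ofLp_dotProduct] using hnorm, lam, hlam, ?_⟩
  have hsolve : (A + lam • 1) *ᵥ θmin = A *ᵥ c := by
    simpa [add_mulVec, smul_mulVec] using congrArg ofLp hkkt
  have hdet' : IsUnit (A + lam • 1).det :=
    (isUnit_iff_isUnit_det _).mp (PosDef.posSemidef_add hA (PosDef.one.smul hlam)).isUnit
  rw [← hsolve, mulVec_mulVec, nonsing_inv_mul _ hdet', one_mulVec]

end Matrix

theorem erm_kkt_characterization_general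
    (d n : ℕ)
    (x : Fin n → (Fin d → ℝ)) (θstar : Fin d → ℝ) (L : ℝ)
    (hθstar : Real.sqrt (θstar ⬝ᵥ θstar) = 1) (hL0 : 0 < L) (hL1 : L < 1)
    (Sn : Matrix (Fin d) (Fin d) ℝ)
    (hSn : Sn = (n : ℝ)⁻¹ • ∑ i : Fin n, vecMulVec (x i) (x i))
    (hSn_inv : IsUnit Sn.det)
    (θn : Fin d → ℝ)
    (hθn_feas : Real.sqrt (θn ⬝ᵥ θn) ≤ L)
    (hθn_min : ∀ θ : Fin d → ℝ, Real.sqrt (θ ⬝ᵥ θ) ≤ L →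
      (n : ℝ)⁻¹ * ∑ i : Fin n, (x i ⬝ᵥ θn - x i ⬝ᵥ θstar) ^ 2 ≤
        (n : ℝ)⁻¹ * ∑ i : Fin n, (x i ⬝ᵥ θ - x i ⬝ᵥ θstar) ^ 2) :
    Real.sqrt (θn ⬝ᵥ θn) = L ∧
    ∃ lam : ℝ, 0 < lam ∧
      θn = (Sn + lam • (1 : Matrix (Fin d) (Fin d) ℝ))⁻¹ *ᵥ (Sn *ᵥ θstar) := by
  have hSn_psd : Sn.PosSemidef :=
    hSn ▸ (posSemidef_sum_vecMulVec_self x).smul (inv_nonneg.mpr n.cast_nonneg)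
  have hrisk (θ : Fin d → ℝ) : (n : ℝ)⁻¹ * ∑ i, (x i ⬝ᵥ θ - x i ⬝ᵥ θstar) ^ 2 =
      (θ - θstar) ⬝ᵥ Sn *ᵥ (θ - θstar) := by
    rw [hSn, smul_mulVec, dotProduct_smul, dotProduct_sum_vecMulVec_self_mulVec, smul_eq_mul]
    simp only [dotProduct_sub]
  refine hSn_psd.kkt_of_isMinOn_ball hSn_inv hL0 (hθstar ▸ hL1) hθn_feas (isMinOn_iff.mpr ?_)
  intro θ hθ
  simpa only [hrisk] using hθn_min θ hθ

/-- **KKT characterization of the constrained ERM.**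
If the empirical covariance matrix `Σ_n = (1/n) ∑ i x_i x_iᵀ` is invertible,
`‖θ⋆‖ = 1` and `0 < L < 1`, then every minimizer `θ_n` of the empirical risk
`(1/n) ∑ i (⟨x_i, θ⟩ − ⟨x_i, θ⋆⟩)²` over `{θ : ‖θ‖ ≤ L}` lies on the boundary,
`‖θ_n‖ = L`, and there exists `λ_n > 0` with `θ_n = (Σ_n + λ_n I)⁻¹ Σ_n θ⋆`.
(Euclidean norms are expressed via `Real.sqrt (v ⬝ᵥ v)`.) -/
theorem erm_kkt_characterization
    (d n : ℕ) (hd : 1 ≤ d) (hn : 1 ≤ n)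
    (x : Fin n → (Fin d → ℝ)) (θstar : Fin d → ℝ) (L : ℝ)
    (hθstar : Real.sqrt (θstar ⬝ᵥ θstar) = 1) (hL0 : 0 < L) (hL1 : L < 1)
    (Sn : Matrix (Fin d) (Fin d) ℝ)
    (hSn : Sn = (n : ℝ)⁻¹ • ∑ i : Fin n, vecMulVec (x i) (x i))
    (hSn_inv : IsUnit Sn.det)
    (θn : Fin d → ℝ)
    (hθn_feas : Real.sqrt (θn ⬝ᵥ θn) ≤ L)
    (hθn_min : ∀ θ : Fin d → ℝ, Real.sqrt (θ ⬝ᵥ θ) ≤ L →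
      (n : ℝ)⁻¹ * ∑ i : Fin n, (x i ⬝ᵥ θn - x i ⬝ᵥ θstar) ^ 2 ≤
        (n : ℝ)⁻¹ * ∑ i : Fin n, (x i ⬝ᵥ θ - x i ⬝ᵥ θstar) ^ 2) :
    Real.sqrt (θn ⬝ᵥ θn) = L ∧
    ∃ lam : ℝ, 0 < lam ∧
      θn = (Sn + lam • (1 : Matrix (Fin d) (Fin d) ℝ))⁻¹ *ᵥ (Sn *ᵥ θstar) :=
  erm_kkt_characterization_general d n x θstar L hθstar hL0 hL1 Sn hSn hSn_inv θn hθn_feas hθn_min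
end

section
/- Let Σ be a symmetric d×d matrix with ‖I − Σ‖_op ≤ ε for some ε ∈ (0, 1), let θ⋆ ∈ ℝ^d with ‖θ⋆‖ = 1, and let 0 < L < 1. Then every minimizer θ_n of the quadratic form (θ − θ⋆)ᵀ Σ (θ − θ⋆) over the ball {θ : ‖θ‖ ≤ L} satisfies ‖θ_n − L θ⋆‖² ≤ 118 ε². -/
/-!
Write `w = θₙ - L θ⋆` and `Σ = I - E` with `‖E‖ ≤ ε`. Comparing `θₙ` with the feasible point `L θ⋆`
gives `⟪w, Σ w⟫ ≤ (1 - L) (⟪w, Σ θ⋆⟫ + ⟪θ⋆, Σ w⟫)`, and up to errors `ε ‖w‖²` and `ε ‖w‖` this reads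
`‖w‖² ≤ 2 (1 - L) ⟪w, θ⋆⟫`. Feasibility of `θₙ` gives `‖w‖² ≤ -2L ⟪w, θ⋆⟫`; combining the two yields
`(1 - L ε) ‖w‖² ≤ 2 L (1 - L) ε ‖w‖`, whence `‖w‖ ≤ 2 L ε` and `‖w‖² ≤ 4 ε²`.
-/

open Matrix
open scoped RealInnerProductSpace

noncomputable def l2OpNorm {d : ℕ} (A : Matrix (Fin d) (Fin d) ℝ) : ℝ :=
  ‖Matrix.toEuclideanCLM (𝕜 := ℝ) A‖

lemma le_two_mul_mul_of_sq_le {r L ε : ℝ} (hL0 : 0 ≤ L) (hL : L ≤ 1) (hε0 : 0 ≤ ε) (hε : ε < 1)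
    (h : (1 - L * ε) * r ^ 2 ≤ 2 * L * (1 - L) * ε * r) : r ≤ 2 * L * ε := by
  by_contra! hlt
  have hLε : L * ε < 1 := by nlinarith
  have hr : 0 < r := lt_of_le_of_lt (by positivity) hlt
  nlinarith [mul_pos (sub_pos.2 hLε) (mul_pos hr (sub_pos.2 hlt)),
    mul_nonneg (mul_nonneg (mul_nonneg hL0 hε0) hr.le) (mul_nonneg hL0 (sub_nonneg.2 hε.le))]

section InnerProductSpace

variable {V : Type*} [NormedAddCommGroup V] [InnerProductSpace ℝ V]

lemma abs_inner_apply_sub_inner_le {S : V →L[ℝ] V} {ε : ℝ} (hS : ‖1 - S‖ ≤ ε) (x y : V) :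
    |⟪x, S y⟫ - ⟪x, y⟫| ≤ ε * (‖x‖ * ‖y‖) := by
  have h : ⟪x, S y⟫ - ⟪x, y⟫ = -⟪x, (1 - S) y⟫ := by
    simp only [_root_.sub_apply, one_apply_eq_self, inner_sub_right]
    ring
  calc |⟪x, S y⟫ - ⟪x, y⟫| = |⟪x, (1 - S) y⟫| := by rw [h, abs_neg]
    _ ≤ ‖x‖ * ‖(1 - S) y‖ := abs_real_inner_le_norm _ _
    _ ≤ ‖x‖ * (ε * ‖y‖) := by gcongr; exact (1 - S).le_of_opNorm_le hS y
    _ = ε * (‖x‖ * ‖y‖) := by ring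

lemma inner_apply_add_smul_le (S : V →L[ℝ] V) (v u : V) (c : ℝ)
    (h : ⟪v + c • u, S (v + c • u)⟫ ≤ ⟪c • u, S (c • u)⟫) :
    ⟪v, S v⟫ + c * (⟪v, S u⟫ + ⟪u, S v⟫) ≤ 0 := by
  simp only [map_add, map_smul, inner_add_left, inner_add_right, real_inner_smul_left,
    real_inner_smul_right] at h
  linarith

lemma norm_sub_smul_sq_add_inner_le {u x : V} {L : ℝ} (hu : ‖u‖ = 1) (hx : ‖x‖ ≤ L) :
    ‖x - L • u‖ ^ 2 + 2 * L * ⟪x - L • u, u⟫ ≤ 0 := by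
  have hx2 : ‖x‖ ^ 2 ≤ L ^ 2 := pow_le_pow_left₀ (norm_nonneg x) hx 2
  rw [norm_sub_sq_real, inner_sub_left, real_inner_smul_left, real_inner_smul_right,
    real_inner_self_eq_norm_sq, norm_smul, hu, Real.norm_eq_abs]
  nlinarith [sq_abs L]

theorem norm_sub_smul_le_of_isMinOn {S : V →L[ℝ] V} {ε L : ℝ} (hS : ‖1 - S‖ ≤ ε) (hε : ε < 1)
    (hL : L ≤ 1) {u x : V} (hu : ‖u‖ = 1) (hx : ‖x‖ ≤ L)
    (hmin : IsMinOn (fun y ↦ ⟪y - u, S (y - u)⟫) (Metric.closedBall 0 L) x) :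
    ‖x - L • u‖ ≤ 2 * L * ε := by
  have hL0 : 0 ≤ L := (norm_nonneg x).trans hx
  have hε0 : 0 ≤ ε := (norm_nonneg _).trans hS
  set v := x - L • u
  have hball : L • u ∈ Metric.closedBall (0 : V) L := by
    simp [norm_smul, hu, abs_of_nonneg hL0]
  have hquad : ⟪v, S v⟫ + (L - 1) * (⟪v, S u⟫ + ⟪u, S v⟫) ≤ 0 := by
    have hxu : x - u = v + (L - 1) • u := by simp only [v, sub_smul, one_smul]; abel
    have hLu : L • u - u = (L - 1) • u := by rw [sub_smul, one_smul]
    have := isMinOn_iff.mp hmin _ hball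
    rw [hxu, hLu] at this
    exact inner_apply_add_smul_le S v u (L - 1) this
  have hvu : ‖v‖ ^ 2 + 2 * L * ⟪v, u⟫ ≤ 0 := norm_sub_smul_sq_add_inner_le hu hx
  have hvv := abs_le.mp (abs_inner_apply_sub_inner_le hS v v)
  have hSu := abs_le.mp (abs_inner_apply_sub_inner_le hS v u)
  have hSv := abs_le.mp (abs_inner_apply_sub_inner_le hS u v)
  rw [real_inner_self_eq_norm_sq] at hvv
  rw [hu] at hSu hSv
  rw [real_inner_comm v u] at hSv
  have hlin : (1 - ε) * ‖v‖ ^ 2 ≤ (1 - L) * (2 * ⟪v, u⟫ + 2 * ε * ‖v‖) := by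
    nlinarith [mul_le_mul_of_nonneg_left (add_le_add hSu.2 hSv.2) (sub_nonneg.mpr hL)]
  have key : (1 - L * ε) * ‖v‖ ^ 2 ≤ 2 * L * (1 - L) * ε * ‖v‖ := by
    nlinarith [mul_le_mul_of_nonneg_left hlin hL0, mul_le_mul_of_nonneg_left hvu (sub_nonneg.mpr hL)]
  exact le_two_mul_mul_of_sq_le hL0 hL hε0 hε key

end InnerProductSpace

section EuclideanSpace

variable {ι : Type*} [Fintype ι]

lemma dotProduct_eq_inner_toLp (a b : ι → ℝ) : a ⬝ᵥ b = ⟪WithLp.toLp 2 a, WithLp.toLp 2 b⟫ := by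
  simp [EuclideanSpace.inner_eq_star_dotProduct, dotProduct_comm]

lemma sqrt_dotProduct_self_eq_norm_toLp (a : ι → ℝ) : √(a ⬝ᵥ a) = ‖WithLp.toLp 2 a‖ := by
  rw [dotProduct_eq_inner_toLp, real_inner_self_eq_norm_sq, Real.sqrt_sq (norm_nonneg _)]

lemma dotProduct_mulVec_eq_inner_toEuclideanCLM [DecidableEq ι] (A : Matrix ι ι ℝ) (a b : ι → ℝ) :
    a ⬝ᵥ (A *ᵥ b) = ⟪WithLp.toLp 2 a, Matrix.toEuclideanCLM (𝕜 := ℝ) A (WithLp.toLp 2 b)⟫ := by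
  rw [toEuclideanCLM_toLp, dotProduct_eq_inner_toLp]

end EuclideanSpace

theorem constrained_minimizer_perturbation_general
    (d : ℕ)
    (S : Matrix (Fin d) (Fin d) ℝ)
    (ε : ℝ) (hε1 : ε < 1)
    (hS_close : l2OpNorm ((1 : Matrix (Fin d) (Fin d) ℝ) - S) ≤ ε)
    (θstar : Fin d → ℝ) (hθstar : Real.sqrt (θstar ⬝ᵥ θstar) = 1)
    (L : ℝ) (hL1 : L < 1)
    (θn : Fin d → ℝ)
    (hθn_feas : Real.sqrt (θn ⬝ᵥ θn) ≤ L)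
    (hθn_min : ∀ θ : Fin d → ℝ, Real.sqrt (θ ⬝ᵥ θ) ≤ L →
      (θn - θstar) ⬝ᵥ (S *ᵥ (θn - θstar)) ≤ (θ - θstar) ⬝ᵥ (S *ᵥ (θ - θstar))) :
    (θn - L • θstar) ⬝ᵥ (θn - L • θstar) ≤ 118 * ε ^ 2 := by
  have hL0 : 0 ≤ L := (Real.sqrt_nonneg _).trans hθn_feas
  have hT : ‖1 - Matrix.toEuclideanCLM (𝕜 := ℝ) S‖ ≤ ε := by
    rwa [l2OpNorm, map_sub, map_one] at hS_close
  have hmin : IsMinOn (fun y ↦ ⟪y - WithLp.toLp 2 θstar,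
      Matrix.toEuclideanCLM (𝕜 := ℝ) S (y - WithLp.toLp 2 θstar)⟫)
      (Metric.closedBall 0 L) (WithLp.toLp 2 θn) := by
    refine isMinOn_iff.mpr fun y hy ↦ ?_
    have := hθn_min y.ofLp (by simpa [sqrt_dotProduct_self_eq_norm_toLp] using hy)
    rwa [dotProduct_mulVec_eq_inner_toEuclideanCLM, dotProduct_mulVec_eq_inner_toEuclideanCLM,
      WithLp.toLp_sub, WithLp.toLp_sub, WithLp.toLp_ofLp] at this
  rw [sqrt_dotProduct_self_eq_norm_toLp] at hθstar hθn_feas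
  have hw := norm_sub_smul_le_of_isMinOn hT hε1 hL1.le hθstar hθn_feas hmin
  rw [dotProduct_eq_inner_toLp, real_inner_self_eq_norm_sq, WithLp.toLp_sub, WithLp.toLp_smul]
  calc _ ≤ (2 * L * ε) ^ 2 := pow_le_pow_left₀ (norm_nonneg _) hw 2
    _ ≤ 118 * ε ^ 2 := by
      have hL2 : L ^ 2 ≤ 1 := by nlinarith
      nlinarith [mul_le_mul_of_nonneg_right hL2 (sq_nonneg ε)]

/-- **Perturbation bound for the constrained minimizer.**
If `Σ` is a symmetric `d×d` matrix with `‖I − Σ‖_op ≤ ε` for some `ε ∈ (0,1)`,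
`‖θ⋆‖ = 1` and `0 < L < 1`, then every minimizer `θ_n` of the quadratic form
`(θ − θ⋆)ᵀ Σ (θ − θ⋆)` over `{θ : ‖θ‖ ≤ L}` satisfies `‖θ_n − L θ⋆‖² ≤ 118 ε²`.
(Euclidean norms of vectors are expressed via `Real.sqrt (v ⬝ᵥ v)` and the squared
norm via `v ⬝ᵥ v`.) -/
theorem constrained_minimizer_perturbation
    (d : ℕ) (hd : 1 ≤ d)
    (S : Matrix (Fin d) (Fin d) ℝ) (hS_symm : S.IsSymm)
    (ε : ℝ) (hε0 : 0 < ε) (hε1 : ε < 1)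
    (hS_close : l2OpNorm ((1 : Matrix (Fin d) (Fin d) ℝ) - S) ≤ ε)
    (θstar : Fin d → ℝ) (hθstar : Real.sqrt (θstar ⬝ᵥ θstar) = 1)
    (L : ℝ) (hL0 : 0 < L) (hL1 : L < 1)
    (θn : Fin d → ℝ)
    (hθn_feas : Real.sqrt (θn ⬝ᵥ θn) ≤ L)
    (hθn_min : ∀ θ : Fin d → ℝ, Real.sqrt (θ ⬝ᵥ θ) ≤ L →
      (θn - θstar) ⬝ᵥ (S *ᵥ (θn - θstar)) ≤ (θ - θstar) ⬝ᵥ (S *ᵥ (θ - θstar))) :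
    (θn - L • θstar) ⬝ᵥ (θn - L • θstar) ≤ 118 * ε ^ 2 :=
  constrained_minimizer_perturbation_general d S ε hε1 hS_close θstar hθstar L hL1 θn hθn_feas
    hθn_min
end
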